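/- arXiv:2503.21988 — 6 statements merged into one kernel-verified Lean document; each statement's English description precedes it below -/
import Mathlib

section
/- Let P and Q be Laurent polynomials in one variable with integer coefficients, p a prime, and n, k nonnegative integers. Then ct(P^{pn+k}·Q) ≡ ct(P^n·Λ_p(P^k·Q)) (mod p), where ct denotes the constant term and Λ_p deletes all terms of a Laurent polynomial whose exponent is not divisible by p and then substitutes x^p ↦ x. -/
open scoped Classical

/-- `Λ_p`: delete terms whose exponent is not divisible by `p` and substitute `x^p ↦ x`. -/
noncomputable def lam {R : Type*} [Semiring R] (p : ℕ) (hp : p ≠ 0) (Q : LaurentPolynomial R) :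
    LaurentPolynomial R :=
  AddMonoidAlgebra.ofCoeff (Finsupp.comapDomain (fun i : ℤ => (p : ℤ) * i) Q.coeff
    ((mul_right_injective₀ (Int.natCast_ne_zero.mpr hp)).injOn))

/-- `substPow p Q = Q(x^p)`. -/
noncomputable def substPow {R : Type*} [Semiring R] (p : ℕ) (Q : LaurentPolynomial R) :
    LaurentPolynomial R :=
  AddMonoidAlgebra.ofCoeff (Finsupp.mapDomain (fun i : ℤ => (p : ℤ) * i) Q.coeff)

/-- The largest absolute value of an exponent with nonzero coefficient (`0` for `Q = 0`). -/
noncomputable def ldeg {R : Type*} [Semiring R] (Q : LaurentPolynomial R) : ℕ :=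
  Q.coeff.support.sup fun i => i.natAbs

lemma lam_apply {R : Type*} [Semiring R] (p : ℕ) (hp : p ≠ 0) (Q : LaurentPolynomial R) (i : ℤ) :
    (lam p hp Q).coeff i = Q.coeff ((p : ℤ) * i) := rfl

/-- Reduction of coefficients mod `p` as a bare function. -/
noncomputable def mc (p : ℕ) (Q : LaurentPolynomial ℤ) : LaurentPolynomial (ZMod p) :=
  AddMonoidAlgebra.ofCoeff (Finsupp.mapRange (fun z : ℤ => (z : ZMod p)) (by simp) Q.coeff)

lemma mc_apply (p : ℕ) (Q : LaurentPolynomial ℤ) (i : ℤ) :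
    (mc p Q).coeff i = ((Q.coeff i : ℤ) : ZMod p) := by
  simp [mc, Finsupp.mapRange_apply]

lemma mc_add (p : ℕ) (a b : LaurentPolynomial ℤ) : mc p (a + b) = mc p a + mc p b := by
  unfold mc
  exact congrArg AddMonoidAlgebra.ofCoeff (Finsupp.mapRange_add (fun x y => Int.cast_add x y) a.coeff b.coeff)

lemma mc_mul (p : ℕ) (a b : LaurentPolynomial ℤ) : mc p (a * b) = mc p a * mc p b := by
  induction a using AddMonoidAlgebra.induction_linear with
  | zero => simp [mc]
  | add f g hf hg => rw [add_mul, mc_add, mc_add, hf, hg, add_mul]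
  | single i r =>
    induction b using AddMonoidAlgebra.induction_linear with
    | zero => simp [mc]
    | add f g hf hg => rw [mul_add, mc_add, mc_add, hf, hg, mul_add]
    | single j s =>
      show mc p (AddMonoidAlgebra.single i r * AddMonoidAlgebra.single j s) = _
      rw [AddMonoidAlgebra.single_mul_single]
      unfold mc
      rw [AddMonoidAlgebra.coeff_single, AddMonoidAlgebra.coeff_single, AddMonoidAlgebra.coeff_single,
        Finsupp.mapRange_single, Finsupp.mapRange_single, Finsupp.mapRange_single,
        AddMonoidAlgebra.ofCoeff_single, AddMonoidAlgebra.ofCoeff_single, AddMonoidAlgebra.ofCoeff_single,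
        AddMonoidAlgebra.single_mul_single]
      push_cast
      rfl

/-- Reduction of coefficients mod `p`, as a ring hom of Laurent polynomials. -/
noncomputable def mapCoe (p : ℕ) : LaurentPolynomial ℤ →+* LaurentPolynomial (ZMod p) where
  toFun := mc p
  map_zero' := by simp [mc]
  map_add' := mc_add p
  map_one' := by
    show mc p (AddMonoidAlgebra.single 0 1) = 1
    unfold mc
    rw [AddMonoidAlgebra.coeff_single, Finsupp.mapRange_single, AddMonoidAlgebra.ofCoeff_single]
    norm_num
  map_mul' := mc_mul p

lemma mapCoe_apply (p : ℕ) (Q : LaurentPolynomial ℤ) (i : ℤ) :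
    (mapCoe p Q).coeff i = ((Q.coeff i : ℤ) : ZMod p) := mc_apply p Q i

lemma mapCoe_lam (p : ℕ) (hp : p ≠ 0) (Q : LaurentPolynomial ℤ) :
    mapCoe p (lam p hp Q) = lam p hp (mapCoe p Q) := by
  ext i
  rw [lam_apply, mapCoe_apply, mapCoe_apply, lam_apply]

lemma substPow_pow {R : Type*} [Semiring R] (p : ℕ) (A : LaurentPolynomial R) (n : ℕ) :
    substPow p (A ^ n) = substPow p A ^ n := by
  have h : ∀ B : LaurentPolynomial R,
      substPow p B = AddMonoidAlgebra.mapDomainRingHom R (AddMonoidHom.mulLeft ((p : ℤ))) B := by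
    intro B; exact rfl
  rw [h, h, map_pow]

lemma sum_helper {R : Type*} [CommSemiring R] (S : LaurentPolynomial R) (t : ℤ) (b : R) :
    (S.coeff.sum fun c d => if t + c = 0 then b * d else 0) = b * S.coeff (-t) := by
  simp only [show ∀ c : ℤ, (t + c = 0) ↔ (c = -t) from fun c => by omega]
  rw [Finsupp.sum_ite_eq' S.coeff (-t) fun _ d => b * d]
  split_ifs with h
  · rfl
  · rw [Finsupp.notMem_support_iff.mp h, mul_zero]

lemma ct_substPow_mul {R : Type*} [CommSemiring R] (p : ℕ) (hp : p ≠ 0)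
    (B S : LaurentPolynomial R) :
    (substPow p B * S).coeff 0 = (B * lam p hp S).coeff 0 := by
  classical
  rw [substPow, AddMonoidAlgebra.coeff_mul, AddMonoidAlgebra.coeff_mul, AddMonoidAlgebra.coeff_ofCoeff]
  rw [Finsupp.sum_mapDomain_index (by intro a; simp)
    (by
      intro a m₁ m₂
      rw [← Finsupp.sum_add]
      congr 1
      ext c d
      split_ifs <;> simp [add_mul])]
  refine Finsupp.sum_congr fun a _ => ?_
  rw [sum_helper]
  have : ∀ c d, (if a + c = 0 then B.coeff a * d else 0) = if a + c = 0 then B.coeff a * d else 0 := fun _ _ => rfl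
  rw [show ((lam p hp S).coeff.sum fun c d => if a + c = 0 then B.coeff a * d else 0) = B.coeff a * (lam p hp S).coeff (-a)
    from sum_helper _ a (B.coeff a)]
  rw [lam_apply, mul_neg]

lemma frob (p : ℕ) [hp : Fact p.Prime] (A : LaurentPolynomial (ZMod p)) :
    A ^ p = substPow p A := by
  haveI : CharP (LaurentPolynomial (ZMod p)) p :=
    charP_of_injective_ringHom (R := ZMod p)
      (f := LaurentPolynomial.C)
      (fun a b h => Finsupp.single_injective (0 : ℤ)
        (by rw [← AddMonoidAlgebra.coeff_single, ← AddMonoidAlgebra.coeff_single, LaurentPolynomial.single_eq_C, LaurentPolynomial.single_eq_C]; exact congrArg AddMonoidAlgebra.coeff h)) p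
  rw [← frobenius_def (p := p)]
  conv_lhs => rw [← AddMonoidAlgebra.sum_coeff_single A, Finsupp.sum]
  rw [map_sum]
  rw [substPow, Finsupp.mapDomain, Finsupp.sum, AddMonoidAlgebra.ofCoeff_sum]
  refine Finset.sum_congr rfl fun i _ => ?_
  rw [frobenius_def, AddMonoidAlgebra.single_pow, ZMod.pow_card, AddMonoidAlgebra.ofCoeff_single]
  norm_num

/-- `ct(P^{pn+k}·Q) ≡ ct(P^n·Λ_p(P^k·Q)) (mod p)`. -/
theorem stmt1 (p : ℕ) (hp : p.Prime) (P Q : LaurentPolynomial ℤ) (n k : ℕ) :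
    (p : ℤ) ∣ (P ^ (p * n + k) * Q).coeff 0 - (P ^ n * lam p hp.ne_zero (P ^ k * Q)).coeff 0 := by
  haveI : Fact p.Prime := ⟨hp⟩
  rw [← ZMod.intCast_zmod_eq_zero_iff_dvd]
  push_cast
  rw [sub_eq_zero]
  have h1 : ((((P ^ (p * n + k) * Q).coeff 0 : ℤ)) : ZMod p) = (mapCoe p (P ^ (p * n + k) * Q)).coeff 0 := (mapCoe_apply _ _ _).symm
  have h2 : ((((P ^ n * lam p hp.ne_zero (P ^ k * Q)).coeff 0 : ℤ)) : ZMod p)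
      = (mapCoe p (P ^ n * lam p hp.ne_zero (P ^ k * Q))).coeff 0 := (mapCoe_apply _ _ _).symm
  rw [h1, h2, map_mul, map_pow, map_mul, map_pow, mapCoe_lam, map_mul, map_pow]
  set A := mapCoe p P
  set B := mapCoe p Q
  have key : A ^ (p * n + k) * B = substPow p (A ^ n) * (A ^ k * B) := by
    rw [substPow_pow, ← frob, pow_add, pow_mul]
    ring
  rw [key, ct_substPow_mul p hp.ne_zero]
end

section
/- Let P, Q be Laurent polynomials in one variable and let Q_0 = Q with Q_{n+1} obtained from Q_n by applying some Λ_p^{k} (k ∈ {0,…,p−1}). Then for all n, deg(Q_n) ≤ deg(P) + (deg(Q) − deg(P))/p^n. In particular, if n > log_p(deg(Q) − deg(P)) and deg(Q) > deg(P), then deg(Q_n) ≤ deg(P). -/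
open scoped Classical

lemma ldeg_spec {R : Type*} [Semiring R] (Q : LaurentPolynomial R) {i : ℤ}
    (hi : i ∈ Q.coeff.support) : i.natAbs ≤ ldeg Q := Finset.le_sup hi

lemma ldeg_mul_le (A B : LaurentPolynomial ℤ) : ldeg (A * B) ≤ ldeg A + ldeg B := by
  apply Finset.sup_le
  intro i hi
  have := AddMonoidAlgebra.support_coeff_mul_subset A B hi
  rw [Finset.mem_add] at this
  obtain ⟨a, ha, b, hb, rfl⟩ := this
  calc (a + b).natAbs ≤ a.natAbs + b.natAbs := Int.natAbs_add_le a b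
    _ ≤ ldeg A + ldeg B := add_le_add (ldeg_spec A ha) (ldeg_spec B hb)

lemma ldeg_pow_le (A : LaurentPolynomial ℤ) (k : ℕ) : ldeg (A ^ k) ≤ k * ldeg A := by
  induction k with
  | zero =>
    simp only [pow_zero, zero_mul, Nat.le_zero, ldeg]
    have h1 : (1 : LaurentPolynomial ℤ).coeff.support ⊆ {0} := Finsupp.support_single_subset
    refine Nat.eq_zero_of_le_zero (Finset.sup_le fun i hi => ?_)
    have := h1 hi
    simp only [Finset.mem_singleton] at this
    simp [this]
  | succ n ih =>
    calc ldeg (A ^ (n + 1)) = ldeg (A ^ n * A) := by rw [pow_succ]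
      _ ≤ ldeg (A ^ n) + ldeg A := ldeg_mul_le _ _
      _ ≤ n * ldeg A + ldeg A := by omega
      _ = (n + 1) * ldeg A := by ring

lemma ldeg_lam_le (p : ℕ) (hp : p ≠ 0) (A : LaurentPolynomial ℤ) :
    p * ldeg (lam p hp A) ≤ ldeg A := by
  have key : ∀ i ∈ (lam p hp A).coeff.support, p * i.natAbs ≤ ldeg A := by
    intro i hi
    rw [Finsupp.mem_support_iff, lam, AddMonoidAlgebra.coeff_ofCoeff, Finsupp.comapDomain_apply, ← Finsupp.mem_support_iff] at hi
    have := ldeg_spec A hi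
    rwa [Int.natAbs_mul, Int.natAbs_natCast] at this
  rcases Finset.eq_empty_or_nonempty (lam p hp A).coeff.support with h | h
  · simp [ldeg, h]
  · obtain ⟨i, hi, hsup⟩ := Finset.exists_mem_eq_sup _ h (fun i : ℤ => i.natAbs)
    rw [ldeg, hsup]
    exact key i hi

/-- if `Q_0 = Q` and each `Q_{n+1} = Λ_p(P^{k_n} Q_n)` for some digit `k_n < p`,
then `deg Q_n ≤ deg P + (deg Q − deg P)/p^n`; in particular, if `deg Q > deg P` and
`n > log_p(deg Q − deg P)` then `deg Q_n ≤ deg P`. -/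
theorem stmt4 (p : ℕ) (hp : p.Prime) (P Q : LaurentPolynomial ℤ)
    (Qs : ℕ → LaurentPolynomial ℤ) (h0 : Qs 0 = Q)
    (hstep : ∀ n, ∃ k < p, Qs (n + 1) = lam p hp.ne_zero (P ^ k * Qs n)) :
    (∀ n, (ldeg (Qs n) : ℝ) ≤ (ldeg P : ℝ) + ((ldeg Q : ℝ) - (ldeg P : ℝ)) / (p : ℝ) ^ n) ∧
    (∀ n : ℕ, ldeg P < ldeg Q →
      Real.logb p ((ldeg Q : ℝ) - (ldeg P : ℝ)) < n → ldeg (Qs n) ≤ ldeg P) := by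
  have hp2 : 2 ≤ p := hp.two_le
  have hppos : (0 : ℝ) < p := by positivity
  have hstepnat : ∀ n, p * ldeg (Qs (n + 1)) ≤ (p - 1) * ldeg P + ldeg (Qs n) := by
    intro n
    obtain ⟨k, hk, heq⟩ := hstep n
    calc p * ldeg (Qs (n + 1)) ≤ ldeg (P ^ k * Qs n) := heq ▸ ldeg_lam_le _ _ _
      _ ≤ ldeg (P ^ k) + ldeg (Qs n) := ldeg_mul_le _ _
      _ ≤ k * ldeg P + ldeg (Qs n) := by have := ldeg_pow_le P k; omega
      _ ≤ (p - 1) * ldeg P + ldeg (Qs n) := by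
          have : k ≤ p - 1 := by omega
          exact add_le_add_left (Nat.mul_le_mul_right _ this) _
  have main : ∀ n, (ldeg (Qs n) : ℝ) ≤ (ldeg P : ℝ) + ((ldeg Q : ℝ) - (ldeg P : ℝ)) / (p : ℝ) ^ n := by
    intro n
    induction n with
    | zero => simp [h0]
    | succ n ih =>
      have h1 : (p : ℝ) * ldeg (Qs (n + 1)) ≤ ((p : ℝ) - 1) * ldeg P + ldeg (Qs n) := by
        have := hstepnat n
        have hc : ((p : ℕ) * ldeg (Qs (n + 1)) : ℝ) ≤ (((p - 1) * ldeg P + ldeg (Qs n) : ℕ) : ℝ) := by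
          exact_mod_cast this
        push_cast [Nat.cast_sub (by omega : 1 ≤ p)] at hc
        exact hc
      have h2 : ((p : ℝ) - 1) * ldeg P + (ldeg (Qs n) : ℝ) ≤
          ((p : ℝ) - 1) * ldeg P + ((ldeg P : ℝ) + ((ldeg Q : ℝ) - (ldeg P : ℝ)) / (p : ℝ) ^ n) :=
        add_le_add_right ih _
      have h3 : (p : ℝ) * ldeg (Qs (n + 1)) ≤
          (p : ℝ) * ((ldeg P : ℝ) + ((ldeg Q : ℝ) - (ldeg P : ℝ)) / (p : ℝ) ^ (n + 1)) := by
        refine le_trans h1 (le_trans h2 (le_of_eq ?_))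
        field_simp
        ring
      exact le_of_mul_le_mul_left h3 hppos
  refine ⟨main, ?_⟩
  intro n hPQ hlog
  have hpos : (0 : ℝ) < (ldeg Q : ℝ) - (ldeg P : ℝ) := by
    have : (ldeg P : ℝ) < ldeg Q := by exact_mod_cast hPQ
    linarith
  have hlt : ((ldeg Q : ℝ) - (ldeg P : ℝ)) < (p : ℝ) ^ n := by
    have h1 : (1 : ℝ) < p := by exact_mod_cast hp2.trans_lt' one_lt_two
    have := (Real.logb_lt_iff_lt_rpow h1 hpos).mp hlog
    rwa [Real.rpow_natCast] at this
  have h4 : ((ldeg Q : ℝ) - (ldeg P : ℝ)) / (p : ℝ) ^ n < 1 := by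
    rw [div_lt_one (by positivity)]
    exact hlt
  have := main n
  have : (ldeg (Qs n) : ℝ) < (ldeg P : ℝ) + 1 := by linarith
  have : ldeg (Qs n) < ldeg P + 1 := by exact_mod_cast this
  omega
end

section
/- Let P be a one-variable Laurent polynomial and p a prime. If there exists some n ∈ ℕ with p | ct(P^n), then there exists n_0 < p^{p^{2·deg(P)−1}} with p | ct(P^{n_0}). -/
open scoped Classical

namespace Stmt8Aux

open LaurentPolynomial AddMonoidAlgebra

variable {p : ℕ} [hp : Fact p.Prime]

theorem hp0 : p ≠ 0 := hp.out.ne_zero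

instance lchar : CharP (LaurentPolynomial (ZMod p)) p :=
  charP_of_injective_ringHom (f := LaurentPolynomial.C) (fun a b h => by
    simpa using congrArg (fun q => q.coeff 0) h) p

theorem lam_apply (A : LaurentPolynomial (ZMod p)) (i : ℤ) :
    (lam p hp0 A).coeff i = A.coeff ((p : ℤ) * i) := rfl

/-- Frobenius over `ZMod p`: `Q ^ p = Q(x^p)`. -/
theorem pow_card_eq_substPow (Q : LaurentPolynomial (ZMod p)) :
    Q ^ p = substPow p Q := by
  let f : LaurentPolynomial (ZMod p) →+ LaurentPolynomial (ZMod p) :=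
    AddMonoidHom.mk' (fun Q => Q ^ p) (fun a b => add_pow_char a b p)
  let g : LaurentPolynomial (ZMod p) →+ LaurentPolynomial (ZMod p) :=
    AddMonoidHom.mk' (substPow p) (fun a b => by
      simp only [substPow, AddMonoidAlgebra.coeff_add, Finsupp.mapDomain_add,
        AddMonoidAlgebra.ofCoeff_add])
  have key : f = g := AddMonoidAlgebra.addMonoidHom_ext (fun i c => by
    show (AddMonoidAlgebra.single i c : LaurentPolynomial (ZMod p)) ^ p
      = AddMonoidAlgebra.ofCoeff (Finsupp.mapDomain (fun i : ℤ => (p : ℤ) * i) (Finsupp.single i c))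
    rw [AddMonoidAlgebra.single_pow, ZMod.pow_card, Finsupp.mapDomain_single,
      AddMonoidAlgebra.ofCoeff_single, nsmul_eq_mul])
  exact DFunLike.congr_fun key Q

/-- Key adjunction: `ct(A · B(x^p)) = ct(Λ_p(A) · B)`. -/
theorem ct_mul_substPow (A B : LaurentPolynomial (ZMod p)) :
    (A * substPow p B).coeff 0 = (lam p hp0 A * B).coeff 0 := by
  have hL : A * substPow p B
      = ∑ j ∈ B.coeff.support, A * AddMonoidAlgebra.single ((p : ℤ) * j) (B.coeff j) := by
    rw [substPow, Finsupp.mapDomain, Finsupp.sum, AddMonoidAlgebra.ofCoeff_sum, Finset.mul_sum]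
    rfl
  have hR : lam p hp0 A * B
      = ∑ j ∈ B.coeff.support, lam p hp0 A * AddMonoidAlgebra.single j (B.coeff j) := by
    conv_lhs => rw [← AddMonoidAlgebra.sum_coeff_single B, Finsupp.sum, Finset.mul_sum]
  rw [hL, hR]
  rw [AddMonoidAlgebra.coeff_sum, AddMonoidAlgebra.coeff_sum, Finsupp.finset_sum_apply,
    Finsupp.finset_sum_apply]
  refine Finset.sum_congr rfl fun j _ => ?_
  rw [AddMonoidAlgebra.coeff_mul_single_apply, AddMonoidAlgebra.coeff_mul_single_apply, lam_apply]
  congr 2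
  ring


/-- Reduction mod `p`, as an algebra hom. -/
noncomputable def pi : LaurentPolynomial ℤ →ₐ[ℤ] LaurentPolynomial (ZMod p) :=
  AddMonoidAlgebra.lift ℤ (LaurentPolynomial (ZMod p)) ℤ
    { toFun := fun n => LaurentPolynomial.T (Multiplicative.toAdd n)
      map_one' := LaurentPolynomial.T_zero
      map_mul' := fun m n => LaurentPolynomial.T_add _ _ }

theorem pi_single (i : ℤ) (c : ℤ) :
    (pi (p := p)) (AddMonoidAlgebra.single i c) = AddMonoidAlgebra.single i ((c : ZMod p)) := by
  rw [pi, AddMonoidAlgebra.lift_single]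
  show c • (AddMonoidAlgebra.single i (1 : ZMod p)) = _
  rw [AddMonoidAlgebra.smul_single]
  congr 1
  simp

theorem pi_apply (Q : LaurentPolynomial ℤ) (i : ℤ) :
    ((pi (p := p)) Q).coeff i = ((Q.coeff i : ℤ) : ZMod p) := by
  let f1 : LaurentPolynomial ℤ →+ ZMod p :=
    (Finsupp.applyAddHom i).comp (AddMonoidAlgebra.coeffAddEquiv.toAddMonoidHom.comp
      (AddMonoidHom.mk' (pi (p := p)) (map_add pi)))
  let f2 : LaurentPolynomial ℤ →+ ZMod p :=
    (Int.castAddHom (ZMod p)).comp ((Finsupp.applyAddHom i).comp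
      AddMonoidAlgebra.coeffAddEquiv.toAddMonoidHom)
  have key : f1 = f2 := AddMonoidAlgebra.addMonoidHom_ext (fun a b => by
    show ((pi (p := p)) (AddMonoidAlgebra.single a b)).coeff i = ((Finsupp.single a b i : ℤ) : ZMod p)
    rw [pi_single]
    classical
    rw [AddMonoidAlgebra.coeff_single, Finsupp.single_apply, Finsupp.single_apply, apply_ite (fun x : ℤ => (x : ZMod p))]
    simp)
  exact DFunLike.congr_fun key Q

variable (p) in
/-- One transition of the Rowland–Zeilberger automaton. -/
noncomputable def step (P' : LaurentPolynomial (ZMod p)) (Q : LaurentPolynomial (ZMod p))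
    (e : ℕ) : LaurentPolynomial (ZMod p) :=
  lam p hp0 (P' ^ e * Q)

theorem step_ct (P' Q : LaurentPolynomial (ZMod p)) (e m : ℕ) :
    (P' ^ (e + p * m) * Q).coeff 0 = (P' ^ m * step p P' Q e).coeff 0 := by
  have h1 : P' ^ (e + p * m) * Q = (P' ^ e * Q) * substPow p (P' ^ m) := by
    rw [← pow_card_eq_substPow, ← pow_mul, pow_add]
    ring
  rw [h1, ct_mul_substPow, mul_comm]
  rfl

theorem run_ct (P' : LaurentPolynomial (ZMod p)) (L : List ℕ) (Q : LaurentPolynomial (ZMod p)) :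
    (P' ^ (Nat.ofDigits p L) * Q).coeff 0 = (L.foldl (step p P') Q).coeff 0 := by
  induction L generalizing Q with
  | nil => simp [Nat.ofDigits_nil]
  | cons d t ih =>
      have h1 : Nat.ofDigits p (d :: t) = d + p * Nat.ofDigits p t := by
        rw [Nat.ofDigits_cons]
      rw [h1, step_ct, ih]
      rfl

theorem supp_mul {A B : LaurentPolynomial (ZMod p)} {loA hiA loB hiB : ℤ}
    (hA : ∀ i ∈ A.coeff.support, loA ≤ i ∧ i ≤ hiA) (hB : ∀ i ∈ B.coeff.support, loB ≤ i ∧ i ≤ hiB) :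
    ∀ i ∈ (A * B).coeff.support, loA + loB ≤ i ∧ i ≤ hiA + hiB := by
  intro i hi
  have := AddMonoidAlgebra.support_coeff_mul_subset A B hi
  rw [Finset.mem_add] at this
  obtain ⟨y, hy, z, hz, rfl⟩ := this
  obtain ⟨h1, h2⟩ := hA y hy
  obtain ⟨h3, h4⟩ := hB z hz
  exact ⟨add_le_add h1 h3, add_le_add h2 h4⟩

theorem supp_pow {P' : LaurentPolynomial (ZMod p)} {d : ℤ}
    (hP : ∀ i ∈ P'.coeff.support, -d ≤ i ∧ i ≤ d) (e : ℕ) :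
    ∀ i ∈ (P' ^ e).coeff.support, -(e * d) ≤ i ∧ i ≤ e * d := by
  induction e with
  | zero =>
      intro i hi
      have h1 : ((1 : LaurentPolynomial (ZMod p))).coeff.support ⊆ {0} := Finsupp.support_single_subset
      have := h1 (by simpa using hi)
      simp only [Finset.mem_singleton] at this
      subst this
      simp
  | succ e ih =>
      intro i hi
      rw [pow_succ] at hi
      have := supp_mul ih hP i hi
      constructor <;> [push_cast; push_cast] <;> linarith [this.1, this.2]

theorem supp_step {P' Q : LaurentPolynomial (ZMod p)} {d : ℤ} (hd : 1 ≤ d)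
    (hP : ∀ i ∈ P'.coeff.support, -d ≤ i ∧ i ≤ d)
    (hQ : ∀ i ∈ Q.coeff.support, -(d - 1) ≤ i ∧ i ≤ d - 1) {e : ℕ} (he : e < p) :
    ∀ i ∈ (step p P' Q e).coeff.support, -(d - 1) ≤ i ∧ i ≤ d - 1 := by
  intro i hi
  have h1 : (P' ^ e * Q).coeff ((p : ℤ) * i) ≠ 0 := by
    have : (step p P' Q e).coeff i ≠ 0 := Finsupp.mem_support_iff.mp hi
    rwa [step, lam_apply] at this
  have h2 := supp_mul (supp_pow hP e) hQ ((p : ℤ) * i) (Finsupp.mem_support_iff.mpr h1)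
  have hpe : (e : ℤ) ≤ (p : ℤ) - 1 := by omega
  have hppos : (0 : ℤ) < (p : ℤ) := by exact_mod_cast hp.out.pos
  constructor
  · nlinarith [h2.1]
  · nlinarith [h2.2]

theorem supp_run {P' : LaurentPolynomial (ZMod p)} {d : ℤ} (hd : 1 ≤ d)
    (hP : ∀ i ∈ P'.coeff.support, -d ≤ i ∧ i ≤ d) (L : List ℕ) (hL : ∀ e ∈ L, e < p)
    (Q : LaurentPolynomial (ZMod p)) (hQ : ∀ i ∈ Q.coeff.support, -(d - 1) ≤ i ∧ i ≤ d - 1) :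
    ∀ i ∈ (L.foldl (step p P') Q).coeff.support, -(d - 1) ≤ i ∧ i ≤ d - 1 := by
  induction L generalizing Q with
  | nil => exact hQ
  | cons e t ih =>
      exact ih (fun x hx => hL x (List.mem_cons_of_mem _ hx))
        (step p P' Q e) (supp_step hd hP hQ (hL e (List.mem_cons_self (a := e) (l := t))))

theorem one_supp {d : ℤ} (hd : 1 ≤ d) :
    ∀ i ∈ (1 : LaurentPolynomial (ZMod p)).coeff.support, -(d - 1) ≤ i ∧ i ≤ d - 1 := by
  intro i hi
  have h1 : ((1 : LaurentPolynomial (ZMod p))).coeff.support ⊆ {0} := Finsupp.support_single_subset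
  have := h1 (by simpa using hi)
  simp only [Finset.mem_singleton] at this
  subst this
  omega

theorem shorten (P' : LaurentPolynomial (ZMod p)) {d : ℤ} (hd : 1 ≤ d)
    (hP : ∀ i ∈ P'.coeff.support, -d ≤ i ∧ i ≤ d) :
    ∀ k (L : List ℕ), L.length = k → (∀ e ∈ L, e < p) → (L.foldl (step p P') 1).coeff 0 = 0 →
    ∃ L' : List ℕ, L'.length < p ^ (Finset.Icc (-(d - 1)) (d - 1)).card ∧
      (∀ e ∈ L', e < p) ∧ (L'.foldl (step p P') 1).coeff 0 = 0 := by
  intro k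
  induction k using Nat.strong_induction_on with
  | _ k ih =>
    intro L hlen hdig hct
    set W : Finset ℤ := Finset.Icc (-(d - 1)) (d - 1) with hW
    set N : ℕ := p ^ W.card with hN
    by_cases hsmall : L.length < N
    · exact ⟨L, hsmall, hdig, hct⟩
    push_neg at hsmall
    -- pigeonhole on the states after the first `0, 1, ..., N` digits
    have hcard : Fintype.card (W → ZMod p) < Fintype.card (Fin (N + 1)) := by
      rw [Fintype.card_fun, Fintype.card_coe, Fintype.card_fin, ZMod.card]
      omega
    obtain ⟨a, b, hab, heq⟩ := Fintype.exists_ne_map_eq_of_card_lt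
      (fun i : Fin (N + 1) => fun w : W => ((L.take i).foldl (step p P') 1).coeff w.val) hcard
    wlog hlt : (a : ℕ) < (b : ℕ) generalizing a b
    · exact this b a hab.symm heq.symm (by omega)
    have hsupp : ∀ m : ℕ, ∀ x ∈ ((L.take m).foldl (step p P') 1).coeff.support, x ∈ W := by
      intro m x hx
      have := supp_run hd hP (L.take m) (fun e he => hdig e (List.take_subset m L he)) 1
        (one_supp hd) x hx
      rw [hW, Finset.mem_Icc]
      exact this
    have hstate : (L.take a).foldl (step p P') 1 = (L.take b).foldl (step p P') 1 := by
      ext x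
      by_cases hx : x ∈ W
      · exact congrFun heq ⟨x, hx⟩
      · rw [Finsupp.notMem_support_iff.mp (fun hc => hx (hsupp a x hc)),
          Finsupp.notMem_support_iff.mp (fun hc => hx (hsupp b x hc))]
    set L' : List ℕ := L.take a ++ L.drop b with hL'
    have hble : (b : ℕ) ≤ L.length := le_trans (by omega) hsmall
    have hfold : (L'.foldl (step p P') 1).coeff 0 = 0 := by
      have h2 : L.foldl (step p P') 1 = (L.drop b).foldl (step p P') ((L.take b).foldl (step p P') 1) := by
        conv_lhs => rw [← List.take_append_drop b L]
        rw [List.foldl_append]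
      rw [hL', List.foldl_append, hstate, ← h2]
      exact hct
    have hlen' : L'.length < k := by
      rw [hL', List.length_append, List.length_take, List.length_drop]
      omega
    exact ih L'.length (by omega) L' rfl
      (fun e he => by
        rcases List.mem_append.mp he with h | h
        exacts [hdig e (List.take_subset _ L h), hdig e (List.drop_subset _ L h)])
      hfold

theorem dvd_iff (P : LaurentPolynomial ℤ) (n : ℕ) :
    (p : ℤ) ∣ (P ^ n).coeff 0 ↔ (((pi (p := p)) P) ^ n).coeff 0 = 0 := by
  rw [← map_pow, pi_apply, ZMod.intCast_zmod_eq_zero_iff_dvd]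

end Stmt8Aux

open Stmt8Aux

/-- if `p ∣ ct(P^n)` for some `n`, then this already happens for some
`n₀ < p^(p^(2·deg P − 1))`. -/
theorem stmt8 (p : ℕ) (hp : p.Prime) (P : LaurentPolynomial ℤ)
    (h : ∃ n : ℕ, (p : ℤ) ∣ (P ^ n).coeff 0) :
    ∃ n₀ : ℕ, n₀ < p ^ (p ^ (2 * ldeg P - 1)) ∧ (p : ℤ) ∣ (P ^ n₀).coeff 0 := by
  haveI : Fact p.Prime := ⟨hp⟩
  obtain ⟨n, hn⟩ := h
  by_cases hd0 : ldeg P = 0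
  · -- constant case
    have hPc : P = AddMonoidAlgebra.single 0 (P.coeff 0) := by
      ext i
      by_cases hi : i = 0
      · subst hi; exact (Finsupp.single_eq_same).symm
      · have : i ∉ P.coeff.support := by
          intro hc
          have : i.natAbs ≤ ldeg P := Finset.le_sup (f := fun i : ℤ => i.natAbs) hc
          omega
        rw [Finsupp.notMem_support_iff.mp this, AddMonoidAlgebra.coeff_single, Finsupp.single_apply, if_neg (Ne.symm hi)]
    have hpow : ∀ m : ℕ, (P ^ m).coeff 0 = (P.coeff 0) ^ m := by
      intro m
      conv_lhs => rw [hPc]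
      rw [AddMonoidAlgebra.single_pow]
      show (Finsupp.single ((m • (0 : ℤ))) ((P.coeff 0) ^ m)) 0 = _
      rw [smul_zero, Finsupp.single_eq_same]
    rcases Nat.eq_zero_or_pos n with rfl | hn1
    · exfalso
      rw [hpow] at hn
      simp only [pow_zero] at hn
      have h1 := Int.le_of_dvd one_pos hn
      have h2 := hp.two_le
      omega
    · have hdvd : (p : ℤ) ∣ P.coeff 0 := by
        rw [hpow] at hn
        exact (Nat.prime_iff_prime_int.mp hp).dvd_of_dvd_pow hn
      refine ⟨1, ?_, by rw [hpow, pow_one]; exact hdvd⟩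
      have h3 : 2 * ldeg P - 1 = 0 := by omega
      rw [h3, pow_zero, pow_one]
      exact hp.one_lt
  · -- main case
    set d : ℕ := ldeg P with hd
    have hd1 : 1 ≤ d := Nat.one_le_iff_ne_zero.mpr hd0
    set P' : LaurentPolynomial (ZMod p) := (pi (p := p)) P with hP'
    have hPsupp : ∀ i ∈ P'.coeff.support, -((d : ℤ)) ≤ i ∧ i ≤ (d : ℤ) := by
      intro i hi
      have h1 : P.coeff i ≠ 0 := by
        intro hc
        have := Finsupp.mem_support_iff.mp hi
        rw [hP', pi_apply, hc] at this
        simp at this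
      have : i.natAbs ≤ d := Finset.le_sup (f := fun i : ℤ => i.natAbs)
        (Finsupp.mem_support_iff.mpr h1)
      omega
    have hct : ((Nat.digits p n).foldl (step p P') 1).coeff 0 = 0 := by
      have h1 := run_ct P' (Nat.digits p n) 1
      rw [Nat.ofDigits_digits, mul_one] at h1
      rw [← h1]
      exact (dvd_iff P n).mp hn
    obtain ⟨L', hlen, hdig, hct'⟩ := shorten P' (by exact_mod_cast hd1) hPsupp
      (Nat.digits p n).length (Nat.digits p n) rfl
      (fun e he => Nat.digits_lt_base hp.one_lt he) hct
    have hcard : (Finset.Icc (-((d : ℤ) - 1)) ((d : ℤ) - 1)).card = 2 * d - 1 := by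
      rw [Int.card_Icc]
      omega
    rw [hcard] at hlen
    refine ⟨Nat.ofDigits p L', ?_, ?_⟩
    · calc Nat.ofDigits p L' < p ^ L'.length :=
            Nat.ofDigits_lt_base_pow_length hp.one_lt hdig
        _ ≤ p ^ (p ^ (2 * d - 1)) := Nat.pow_le_pow_right hp.pos (by omega)
    · rw [dvd_iff]
      have h1 := run_ct P' L' 1
      rw [mul_one] at h1
      rw [h1]
      exact hct'
end

section
/- Let P, Q be one-variable Laurent polynomials with integer coefficients and p a prime. If there exists n_0 ∈ ℕ with p | ct(P^{n_0}), then the set {n ∈ ℕ : p | ct(P^n Q)} has natural (asymptotic) density 1. -/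
open scoped Classical

namespace Stmt9Aux

noncomputable def ldeg' {R : Type*} [Semiring R] (Q : LaurentPolynomial R) : ℕ :=
  Q.coeff.support.sup fun i => i.natAbs

section CommRing
variable {R : Type*} [CommRing R]

noncomputable def lamN (d : ℕ) (hd : d ≠ 0) (Q : LaurentPolynomial R) : LaurentPolynomial R :=
  AddMonoidAlgebra.ofCoeff (Finsupp.comapDomain (fun i : ℤ => (d : ℤ) * i) Q.coeff
    ((mul_right_injective₀ (Int.natCast_ne_zero.mpr hd)).injOn))

lemma lamN_apply (d : ℕ) (hd : d ≠ 0) (Q : LaurentPolynomial R) (i : ℤ) :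
    (lamN d hd Q).coeff i = Q.coeff ((d : ℤ) * i) := rfl

lemma lamN_one (hd : (1:ℕ) ≠ 0) (Q : LaurentPolynomial R) : lamN 1 hd Q = Q := by
  ext i; rw [lamN_apply]; norm_num

lemma lamN_congr {d e : ℕ} (h : d = e) (hd : d ≠ 0) (he : e ≠ 0) (Q : LaurentPolynomial R) :
    lamN d hd Q = lamN e he Q := by subst h; rfl

lemma lamN_comp (d e : ℕ) (hd : d ≠ 0) (he : e ≠ 0) (Q : LaurentPolynomial R) :
    lamN d hd (lamN e he Q) = lamN (e * d) (Nat.mul_ne_zero he hd) Q := by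
  ext i
  rw [lamN_apply, lamN_apply, lamN_apply]
  congr 1
  push_cast
  ring

noncomputable def sP (d : ℕ) (Q : LaurentPolynomial R) : LaurentPolynomial R :=
  AddMonoidAlgebra.ofCoeff (Finsupp.mapDomain (fun i : ℤ => (d : ℤ) * i) Q.coeff)

lemma ct_sP_mul (d : ℕ) (hd : d ≠ 0) (A B : LaurentPolynomial R) :
    (sP d A * B).coeff 0 = (A * lamN d hd B).coeff 0 := by
  have inj : Function.Injective (fun i : ℤ => (d : ℤ) * i) :=
    mul_right_injective₀ (Int.natCast_ne_zero.mpr hd)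
  rw [AddMonoidAlgebra.coeff_mul, AddMonoidAlgebra.coeff_mul, sP, AddMonoidAlgebra.coeff_ofCoeff]
  rw [Finsupp.sum_mapDomain_index_inj inj]
  refine Finsupp.sum_congr (fun i _ => ?_)
  have h1 : ∀ (c : R), (B.coeff.sum fun a₂ b₂ => if (d:ℤ) * i + a₂ = 0 then c * b₂ else 0)
      = c * B.coeff (-((d:ℤ) * i)) := by
    intro c
    rw [Finsupp.sum]
    rw [Finset.sum_eq_single (-((d:ℤ)*i))]
    · simp
    · intro j hj hne
      rw [if_neg]; omega
    · intro hn
      simp [Finsupp.notMem_support_iff.mp hn]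
  have h2 : ∀ (c : R), ((lamN d hd B).coeff.sum fun a₂ b₂ => if i + a₂ = 0 then c * b₂ else 0)
      = c * (lamN d hd B).coeff (-i) := by
    intro c
    rw [Finsupp.sum]
    rw [Finset.sum_eq_single (-i)]
    · simp
    · intro j hj hne
      rw [if_neg]; omega
    · intro hn
      simp [Finsupp.notMem_support_iff.mp hn]
  rw [h1, h2, lamN_apply]
  ring_nf

lemma apply_eq_zero_of_gt {Q : LaurentPolynomial R} {i : ℤ} (h : ldeg' Q < i.natAbs) :
    Q.coeff i = 0 := by
  by_contra hne
  have hle : i.natAbs ≤ ldeg' Q :=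
    Finset.le_sup (f := fun i : ℤ => i.natAbs) (Finsupp.mem_support_iff.mpr hne)
  omega

lemma ldeg'_mul_le (A B : LaurentPolynomial R) : ldeg' (A * B) ≤ ldeg' A + ldeg' B := by
  refine Finset.sup_le fun i hi => ?_
  have := AddMonoidAlgebra.support_coeff_mul_subset A B hi
  rw [Finset.mem_add] at this
  obtain ⟨a, ha, b, hb, rfl⟩ := this
  have h1 : a.natAbs ≤ ldeg' A := Finset.le_sup (f := fun i : ℤ => i.natAbs) ha
  have h2 : b.natAbs ≤ ldeg' B := Finset.le_sup (f := fun i : ℤ => i.natAbs) hb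
  have := Int.natAbs_add_le a b
  omega

lemma ldeg'_one : ldeg' (1 : LaurentPolynomial R) = 0 := by
  refine Nat.le_antisymm (Finset.sup_le fun i hi => ?_) (Nat.zero_le _)
  have : i ∈ (Finsupp.single (0:ℤ) (1:R)).support := hi
  have := Finsupp.support_single_subset this
  simp only [Finset.mem_singleton] at this
  simp [this]

lemma ldeg'_pow_le (A : LaurentPolynomial R) (r : ℕ) : ldeg' (A ^ r) ≤ r * ldeg' A := by
  induction r with
  | zero => simp [pow_zero, ldeg'_one]
  | succ n ih =>
    rw [pow_succ]
    calc ldeg' (A ^ n * A) ≤ ldeg' (A ^ n) + ldeg' A := ldeg'_mul_le _ _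
    _ ≤ n * ldeg' A + ldeg' A := by omega
    _ = (n+1) * ldeg' A := by ring

lemma ldeg'_lamN_le (d : ℕ) (hd : d ≠ 0) (Q : LaurentPolynomial R) :
    ldeg' (lamN d hd Q) ≤ ldeg' Q / d := by
  refine Finset.sup_le fun i hi => ?_
  have hQ : Q.coeff ((d:ℤ) * i) ≠ 0 := by
    rw [Finsupp.mem_support_iff, lamN_apply] at hi; exact hi
  have : ((d:ℤ) * i).natAbs ≤ ldeg' Q := by
    by_contra hc
    exact hQ (apply_eq_zero_of_gt (by omega))
  rw [Int.natAbs_mul, Int.natAbs_natCast] at this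
  rw [Nat.le_div_iff_mul_le (Nat.pos_of_ne_zero hd), mul_comm]
  exact this

lemma lamN_eq_single (d : ℕ) (hd : d ≠ 0) (Q : LaurentPolynomial R) (h : ldeg' Q < d) :
    lamN d hd Q = LaurentPolynomial.C (Q.coeff 0) := by
  rw [← LaurentPolynomial.single_eq_C]
  ext i
  rcases eq_or_ne i 0 with rfl | hne
  · simp [lamN_apply, AddMonoidAlgebra.coeff_single]
  · rw [lamN_apply, AddMonoidAlgebra.coeff_single, Finsupp.single_apply, if_neg (by omega)]
    refine apply_eq_zero_of_gt ?_
    have : ((d:ℤ) * i).natAbs = d * i.natAbs := by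
      rw [Int.natAbs_mul, Int.natAbs_natCast]
    rw [this]
    have : 1 ≤ i.natAbs := by omega
    nlinarith

lemma ct_mul_C (F : LaurentPolynomial R) (c : R) :
    (F * LaurentPolynomial.C c).coeff 0 = F.coeff 0 * c := by
  rw [mul_comm, LaurentPolynomial.C_eq_algebraMap, ← Algebra.smul_def]
  rw [AddMonoidAlgebra.coeff_smul_apply, smul_eq_mul, mul_comm]

end CommRing

section Zmod2
variable {p : ℕ} [Fact p.Prime]

instance : CharP (LaurentPolynomial (ZMod p)) p := by
  refine charP_of_injective_ringHom (R := ZMod p)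
    (f := (AddMonoidAlgebra.singleZeroRingHom : ZMod p →+* AddMonoidAlgebra (ZMod p) ℤ)) ?_ p
  intro a b hab
  have : Finsupp.single (0:ℤ) a = Finsupp.single (0:ℤ) b := congrArg AddMonoidAlgebra.coeff hab
  exact Finsupp.single_injective 0 this

lemma frob (A : LaurentPolynomial (ZMod p)) : A ^ p = sP p A := by
  have : A ^ p = frobenius _ p A := rfl
  rw [this]
  conv_lhs => rw [← AddMonoidAlgebra.sum_coeff_single A]
  rw [Finsupp.sum, map_sum, sP, Finsupp.mapDomain, Finsupp.sum]
  rw [← AddMonoidAlgebra.coeff_inj, AddMonoidAlgebra.coeff_sum, AddMonoidAlgebra.coeff_ofCoeff]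
  refine Finset.sum_congr rfl (fun i _ => ?_)
  rw [frobenius_def, AddMonoidAlgebra.single_pow, ZMod.pow_card, nsmul_eq_mul, AddMonoidAlgebra.coeff_single]

lemma hp0 : p ≠ 0 := (Fact.out : p.Prime).ne_zero

lemma step (A B : LaurentPolynomial (ZMod p)) (r m : ℕ) :
    (A ^ (r + p * m) * B).coeff 0 = (A ^ m * lamN p hp0 (A ^ r * B)).coeff 0 := by
  have h1 : A ^ (r + p * m) * B = sP p (A ^ m) * (A ^ r * B) := by
    rw [← frob, pow_add, mul_comm p m, pow_mul, ← pow_mul, mul_comm m p, pow_mul]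
    ring
  rw [h1, ct_sP_mul p hp0]

lemma lamN_pow_ct (A : LaurentPolynomial (ZMod p)) :
    ∀ (K : ℕ) (B : LaurentPolynomial (ZMod p)) (m : ℕ),
      (A ^ (p ^ K * m) * B).coeff 0 = (A ^ m * lamN (p ^ K) (pow_ne_zero _ hp0) B).coeff 0 := by
  intro K
  induction K with
  | zero =>
    intro B m
    rw [lamN_congr (pow_zero p) (pow_ne_zero _ hp0) one_ne_zero, lamN_one, pow_zero, one_mul]
  | succ K ih =>
    intro B m
    have h1 : p ^ (K+1) * m = 0 + p * (p ^ K * m) := by ring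
    rw [h1, step, pow_zero, one_mul, ih, lamN_comp]
    exact congrArg (fun X => (A ^ m * X).coeff 0) (lamN_congr (by ring) _ _ B)

noncomputable def readCT (A : LaurentPolynomial (ZMod p)) :
    ℕ → ℕ → LaurentPolynomial (ZMod p) → LaurentPolynomial (ZMod p)
  | 0, _, B => B
  | ℓ+1, n, B => readCT A ℓ (n / p) (lamN p hp0 (A ^ (n % p) * B))

lemma read_ct (A : LaurentPolynomial (ZMod p)) :
    ∀ (ℓ n m : ℕ) (B : LaurentPolynomial (ZMod p)), n < p ^ ℓ →
      (A ^ (n + p ^ ℓ * m) * B).coeff 0 = (A ^ m * readCT A ℓ n B).coeff 0 := by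
  intro ℓ
  induction ℓ with
  | zero =>
    intro n m B hn
    rw [pow_zero] at hn
    have : n = 0 := by omega
    subst this
    simp [readCT]
  | succ ℓ ih =>
    intro n m B hn
    have hdm := Nat.div_add_mod n p
    have e1 : p * (n / p + p ^ ℓ * m) = p * (n / p) + p ^ (ℓ+1) * m := by ring
    have key : n + p ^ (ℓ+1) * m = n % p + p * (n / p + p ^ ℓ * m) := by
      rw [e1]; omega
    rw [key, step, ih]
    · rfl
    · have hp1 : 0 < p := Nat.pos_of_ne_zero hp0
      rw [Nat.div_lt_iff_lt_mul hp1]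
      rw [pow_succ] at hn
      exact hn

lemma ldeg'_T_le (A B : LaurentPolynomial (ZMod p)) (r : ℕ) (hr : r < p) :
    ldeg' (lamN p hp0 (A ^ r * B)) ≤ max (ldeg' A) (ldeg' B) := by
  set M := max (ldeg' A) (ldeg' B) with hM
  have h1 : ldeg' (A ^ r * B) ≤ r * ldeg' A + ldeg' B :=
    le_trans (ldeg'_mul_le _ _) (by have := ldeg'_pow_le A r; omega)
  have h2 : r * ldeg' A + ldeg' B ≤ p * M := by
    have hA : ldeg' A ≤ M := le_max_left _ _
    have hB : ldeg' B ≤ M := le_max_right _ _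
    calc r * ldeg' A + ldeg' B ≤ (p-1) * M + M := by
          have : r * ldeg' A ≤ (p-1) * M := Nat.mul_le_mul (by omega) hA
          omega
    _ = ((p-1)+1) * M := by ring
    _ = p * M := by
          have hpp : p - 1 + 1 = p := by have : p ≠ 0 := hp0; omega
          rw [hpp]
  calc ldeg' (lamN p hp0 (A ^ r * B)) ≤ ldeg' (A ^ r * B) / p := ldeg'_lamN_le _ _ _
  _ ≤ (p * M) / p := Nat.div_le_div_right (by omega)
  _ = M := Nat.mul_div_cancel_left _ (Nat.pos_of_ne_zero hp0)

lemma ldeg'_readCT (A : LaurentPolynomial (ZMod p)) :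
    ∀ (ℓ n : ℕ) (B : LaurentPolynomial (ZMod p)),
      ldeg' (readCT A ℓ n B) ≤ max (ldeg' A) (ldeg' B) := by
  intro ℓ
  induction ℓ with
  | zero => intro n B; exact le_max_right _ _
  | succ ℓ ih =>
    intro n B
    have h1 := ih (n / p) (lamN p hp0 (A ^ (n % p) * B))
    have h2 : ldeg' (lamN p hp0 (A ^ (n % p) * B)) ≤ max (ldeg' A) (ldeg' B) :=
      ldeg'_T_le A B _ (Nat.mod_lt _ (Nat.pos_of_ne_zero hp0))
    calc ldeg' (readCT A (ℓ+1) n B)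
        ≤ max (ldeg' A) (ldeg' (lamN p hp0 (A ^ (n % p) * B))) := h1
    _ ≤ max (ldeg' A) (ldeg' B) := by omega

lemma main_lemma (A : LaurentPolynomial (ZMod p)) (n₀ K ℓ : ℕ)
    (hn₀ : n₀ < p ^ ℓ) (hA : (A ^ n₀).coeff 0 = 0) (hKA : ldeg' A < p ^ K)
    (B : LaurentPolynomial (ZMod p)) (m : ℕ) (hB : ldeg' B < p ^ K)
    (hm : m % p ^ (K + ℓ + K) = n₀ * p ^ K) : (A ^ m * B).coeff 0 = 0 := by
  set t := m / p ^ (K + ℓ + K) with ht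
  have hdm := Nat.div_add_mod m (p ^ (K + ℓ + K))
  rw [hm] at hdm
  have e : p ^ K * (n₀ + p ^ ℓ * (p ^ K * t)) = n₀ * p ^ K + p ^ (K + ℓ + K) * t := by
    rw [pow_add, pow_add]; ring
  rw [← ht] at hdm
  have hm' : m = p ^ K * (n₀ + p ^ ℓ * (p ^ K * t)) := by omega
  rw [hm', lamN_pow_ct, lamN_eq_single _ _ _ hB, ct_mul_C]
  have hS : ldeg' (readCT A ℓ n₀ 1) < p ^ K := by
    have h1 := ldeg'_readCT A ℓ n₀ 1
    rw [ldeg'_one] at h1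
    omega
  have hS0 : (readCT A ℓ n₀ 1).coeff 0 = 0 := by
    have h3 := read_ct A ℓ n₀ 0 1 hn₀
    rw [Nat.mul_zero, Nat.add_zero, pow_zero, mul_one, one_mul] at h3
    rw [← h3, hA]
  have hF : (A ^ (n₀ + p ^ ℓ * (p ^ K * t))).coeff 0 = 0 := by
    have h1 := read_ct A ℓ n₀ (p ^ K * t) 1 hn₀
    have h2 := lamN_pow_ct A K (readCT A ℓ n₀ 1) t
    rw [lamN_eq_single _ _ _ hS, hS0] at h2
    have hC : (LaurentPolynomial.C (0 : ZMod p)) = 0 :=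
      map_zero (LaurentPolynomial.C : ZMod p →+* LaurentPolynomial (ZMod p))
    rw [hC, mul_zero] at h2
    have hmo : (A ^ (n₀ + p ^ ℓ * (p ^ K * t))).coeff 0
        = (A ^ (n₀ + p ^ ℓ * (p ^ K * t)) * 1).coeff 0 := by rw [mul_one]
    rw [hmo, h1, h2, AddMonoidAlgebra.coeff_zero, Finsupp.zero_apply]
  rw [hF, zero_mul]

lemma ct_zero_of_aligned (A Qb : LaurentPolynomial (ZMod p)) (n₀ K ℓ : ℕ)
    (hn₀ : n₀ < p ^ ℓ) (hA : (A ^ n₀).coeff 0 = 0) (hKA : ldeg' A < p ^ K)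
    (hQ : ldeg' Qb < p ^ K) (n j : ℕ)
    (hj : (n / (p ^ (K + ℓ + K)) ^ j) % p ^ (K + ℓ + K) = n₀ * p ^ K) :
    (A ^ n * Qb).coeff 0 = 0 := by
  set M := K + ℓ + K with hM
  have hpow : (p ^ M) ^ j = p ^ (M * j) := (pow_mul p M j).symm
  rw [hpow] at hj
  have hpos : 0 < p ^ (M * j) := Nat.pow_pos (Nat.pos_of_ne_zero hp0)
  have hdm := Nat.div_add_mod n (p ^ (M * j))
  have split : n = n % p ^ (M * j) + p ^ (M * j) * (n / p ^ (M * j)) := by omega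
  have h1 : (A ^ n * Qb).coeff 0
      = (A ^ (n % p ^ (M * j) + p ^ (M * j) * (n / p ^ (M * j))) * Qb).coeff 0 := by
    rw [← split]
  rw [h1, read_ct A (M * j) _ _ Qb (Nat.mod_lt _ hpos)]
  refine main_lemma A n₀ K ℓ hn₀ hA hKA _ _ ?_ hj
  have := ldeg'_readCT A (M * j) (n % p ^ (M * j)) Qb
  omega

end Zmod2

lemma count_avoid (B b : ℕ) (hB : 1 < B) (hb0 : b ≠ 0) (hbB : b < B) :
    ∀ s : ℕ, (((Finset.range (B ^ s)).filter fun n => ∀ j, n / B ^ j % B ≠ b).card)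
      ≤ (B - 1) ^ s := by
  intro s
  induction s with
  | zero =>
    refine le_trans (Finset.card_filter_le _ _) ?_
    simp
  | succ s ih =>
    set T := (Finset.range B).filter (· ≠ b) with hT
    set S := (Finset.range (B ^ s)).filter (fun n => ∀ j, n / B ^ j % B ≠ b) with hS
    have hBs : 0 < B ^ s := Nat.pow_pos (by omega)
    have hmap : ∀ n ∈ (Finset.range (B ^ (s+1))).filter (fun n => ∀ j, n / B ^ j % B ≠ b),
        (n % B ^ s, n / B ^ s) ∈ S ×ˢ T := by
      intro n hn
      rw [Finset.mem_filter, Finset.mem_range] at hn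
      obtain ⟨hlt, hav⟩ := hn
      rw [Finset.mem_product]
      constructor
      · rw [hS, Finset.mem_filter, Finset.mem_range]
        refine ⟨Nat.mod_lt _ hBs, fun j => ?_⟩
        rcases lt_or_ge j s with hj | hj
        · have e1 : B ^ s = B ^ j * B ^ (s - j) := by
            rw [← pow_add]; congr 1; omega
          have e2 : n % B ^ s / B ^ j = n / B ^ j % B ^ (s - j) := by
            rw [e1, Nat.mod_mul_right_div_self]
          rw [e2, Nat.mod_mod_of_dvd _ (dvd_pow_self B (by omega))]
          exact hav j
        · have : n % B ^ s / B ^ j = 0 := by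
            apply Nat.div_eq_of_lt
            calc n % B ^ s < B ^ s := Nat.mod_lt _ hBs
            _ ≤ B ^ j := Nat.pow_le_pow_right (by omega) hj
          rw [this, Nat.zero_mod]
          omega
      · rw [hT, Finset.mem_filter, Finset.mem_range]
        have hdiv : n / B ^ s < B := by
          refine (Nat.div_lt_iff_lt_mul hBs).mpr ?_
          calc n < B ^ (s+1) := hlt
          _ = B * B ^ s := by ring
        refine ⟨hdiv, ?_⟩
        have := hav s
        rwa [Nat.mod_eq_of_lt hdiv] at this
    have hinj : Set.InjOn (fun n => (n % B ^ s, n / B ^ s))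
        ((Finset.range (B ^ (s+1))).filter fun n => ∀ j, n / B ^ j % B ≠ b) := by
      intro x hx y hy hxy
      simp only [Prod.mk.injEq] at hxy
      obtain ⟨h1, h2⟩ := hxy
      have hx1 := Nat.div_add_mod x (B ^ s)
      have hy1 := Nat.div_add_mod y (B ^ s)
      rw [h1, h2] at hx1
      omega
    have hcard := Finset.card_le_card_of_injOn _ hmap hinj
    refine le_trans hcard ?_
    rw [Finset.card_product]
    have hTcard : T.card ≤ B - 1 := by
      rw [hT, Finset.filter_ne', Finset.card_erase_of_mem (Finset.mem_range.mpr hbB),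
        Finset.card_range]
    calc S.card * T.card ≤ (B-1)^s * (B-1) := Nat.mul_le_mul ih hTcard
    _ = (B-1)^(s+1) := by ring

lemma avoid_density (B b : ℕ) (hB : 1 < B) (hb0 : b ≠ 0) (hbB : b < B) :
    Filter.Tendsto (fun N : ℕ =>
      (((Finset.range N).filter fun n => ∀ j, n / B ^ j % B ≠ b).card : ℝ) / N)
      Filter.atTop (nhds 0) := by
  have hB0 : (0:ℝ) < B := by exact_mod_cast (by omega : 0 < B)
  have hB1 : (1:ℝ) ≤ B := by exact_mod_cast (by omega : 1 ≤ B)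
  set θ : ℝ := ((B:ℝ) - 1) / B with hθ
  have hθ0 : 0 ≤ θ := by
    apply div_nonneg _ (le_of_lt hB0)
    linarith
  have hθ1 : θ < 1 := by
    rw [hθ, div_lt_one hB0]
    linarith
  have hlog : Filter.Tendsto (fun N : ℕ => Nat.log B N) Filter.atTop Filter.atTop := by
    refine Filter.tendsto_atTop.mpr fun k => ?_
    refine Filter.eventually_atTop.mpr ⟨B ^ k, fun N hN => ?_⟩
    have hN0 : N ≠ 0 := by
      have : 0 < B ^ k := Nat.pow_pos (by omega)
      omega
    exact (Nat.le_log_iff_pow_le hB hN0).mpr hN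
  have hg : Filter.Tendsto (fun N : ℕ => ((B:ℝ) - 1) * θ ^ (Nat.log B N))
      Filter.atTop (nhds 0) := by
    have h1 := tendsto_pow_atTop_nhds_zero_of_lt_one hθ0 hθ1
    have h2 := (h1.comp hlog).const_mul ((B:ℝ) - 1)
    simpa using h2
  refine squeeze_zero' ?_ ?_ hg
  · filter_upwards with N
    positivity
  · filter_upwards [Filter.eventually_ge_atTop 1] with N hN
    set L := Nat.log B N with hL
    have hcard : (((Finset.range N).filter fun n => ∀ j, n / B ^ j % B ≠ b).card : ℝ)
        ≤ ((B:ℝ) - 1) ^ (L + 1) := by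
      have h1 : ((Finset.range N).filter fun n => ∀ j, n / B ^ j % B ≠ b).card
          ≤ (B - 1) ^ (L + 1) := by
        refine le_trans (Finset.card_le_card ?_) (count_avoid B b hB hb0 hbB (L+1))
        refine Finset.filter_subset_filter _ (Finset.range_subset_range.mpr ?_)
        exact le_of_lt (Nat.lt_pow_succ_log_self hB N)
      calc (((Finset.range N).filter fun n => ∀ j, n / B ^ j % B ≠ b).card : ℝ)
          ≤ ((B - 1 : ℕ) ^ (L + 1) : ℕ) := by exact_mod_cast h1
      _ = ((B - 1 : ℕ) : ℝ) ^ (L + 1) := by push_cast; ring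
      _ ≤ ((B:ℝ) - 1) ^ (L + 1) := by
          apply pow_le_pow_left₀ (by positivity)
          have : ((B - 1 : ℕ) : ℝ) = (B:ℝ) - 1 := by
            have : 1 ≤ B := by omega
            push_cast [this]
            ring
          rw [this]
    have hNlo : (B:ℝ) ^ L ≤ (N:ℝ) := by exact_mod_cast Nat.pow_log_le_self B (by omega)
    have hN0 : (0:ℝ) < N := by exact_mod_cast (by omega : 0 < N)
    have hBL : (0:ℝ) < (B:ℝ) ^ L := by positivity
    calc (((Finset.range N).filter fun n => ∀ j, n / B ^ j % B ≠ b).card : ℝ) / N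
        ≤ ((B:ℝ) - 1) ^ (L + 1) / N := by gcongr
    _ ≤ ((B:ℝ) - 1) ^ (L + 1) / (B:ℝ) ^ L := by
        have hnn : (0:ℝ) ≤ ((B:ℝ) - 1) ^ (L + 1) := by
          apply pow_nonneg
          linarith
        exact div_le_div_of_nonneg_left hnn hBL hNlo
    _ = ((B:ℝ) - 1) * θ ^ L := by
        rw [hθ, div_pow, pow_succ]
        field_simp

section Phi
variable (p : ℕ)

noncomputable def phi : LaurentPolynomial ℤ →+* LaurentPolynomial (ZMod p) :=
  AddMonoidAlgebra.liftNCRingHom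
    ((LaurentPolynomial.C : ZMod p →+* LaurentPolynomial (ZMod p)).comp (Int.castRingHom (ZMod p)))
    (AddMonoidAlgebra.of (ZMod p) ℤ) (fun _ _ => Commute.all _ _)

lemma phi_single (a : ℤ) (b : ℤ) :
    phi p (AddMonoidAlgebra.single a b) = AddMonoidAlgebra.single a ((b : ZMod p)) := by
  have h1 : phi p (AddMonoidAlgebra.single a b)
      = LaurentPolynomial.C ((b : ZMod p))
        * (AddMonoidAlgebra.of (ZMod p) ℤ (Multiplicative.ofAdd a)) := by
    exact AddMonoidAlgebra.liftNC_single _ _ _ _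
  rw [h1, AddMonoidAlgebra.of_apply, ← LaurentPolynomial.single_eq_C,
    AddMonoidAlgebra.single_mul_single]
  simp

lemma phi_apply (F : LaurentPolynomial ℤ) (j : ℤ) :
    (phi p F).coeff j = ((F.coeff j : ℤ) : ZMod p) := by
  induction F using AddMonoidAlgebra.induction with
  | zero => simp
  | single_add a b f ha hb ih =>
    rw [map_add, AddMonoidAlgebra.coeff_add, AddMonoidAlgebra.coeff_add, Finsupp.add_apply, Finsupp.add_apply, phi_single]
    push_cast
    rw [ih]
    congr 1
    rw [AddMonoidAlgebra.coeff_single, AddMonoidAlgebra.coeff_single, Finsupp.single_apply, Finsupp.single_apply]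
    split <;> simp

end Phi

end Stmt9Aux

/-- if `p ∣ ct(P^{n₀})` for some `n₀`, then `{n : p ∣ ct(P^n Q)}` has
natural density `1`. -/
theorem stmt9 (p : ℕ) (hp : p.Prime) (P Q : LaurentPolynomial ℤ)
    (h : ∃ n₀ : ℕ, (p : ℤ) ∣ (P ^ n₀).coeff 0) :
    Filter.Tendsto
      (fun N : ℕ =>
        (((Finset.range N).filter fun n => (p : ℤ) ∣ (P ^ n * Q).coeff 0).card : ℝ) / N)
      Filter.atTop (nhds 1) := by
  haveI : Fact p.Prime := ⟨hp⟩
  obtain ⟨n₀, hn₀dvd⟩ := h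
  set A := Stmt9Aux.phi p P with hA
  set Qb := Stmt9Aux.phi p Q with hQb
  have hp2 : 2 ≤ p := hp.two_le
  have keydvd : ∀ n : ℕ, ((p : ℤ) ∣ (P ^ n * Q).coeff 0) ↔ (A ^ n * Qb).coeff 0 = 0 := by
    intro n
    have key : (A ^ n * Qb).coeff 0 = (((P ^ n * Q).coeff 0 : ℤ) : ZMod p) := by
      rw [hA, hQb, ← map_pow, ← map_mul, Stmt9Aux.phi_apply]
    rw [key]
    exact (ZMod.intCast_zmod_eq_zero_iff_dvd _ p).symm
  have hn₀ : n₀ ≠ 0 := by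
    intro h0
    subst h0
    rw [pow_zero] at hn₀dvd
    have h1 : (1 : LaurentPolynomial ℤ).coeff 0 = 1 := by
      rw [AddMonoidAlgebra.one_def, AddMonoidAlgebra.coeff_single, Finsupp.single_eq_same]
    rw [h1] at hn₀dvd
    have := Int.le_of_dvd (by norm_num) hn₀dvd
    omega
  have hA0 : (A ^ n₀).coeff 0 = 0 := by
    have h1 : (A ^ n₀).coeff 0 = (((P ^ n₀).coeff 0 : ℤ) : ZMod p) := by
      rw [hA, ← map_pow, Stmt9Aux.phi_apply]
    rw [h1]
    exact (ZMod.intCast_zmod_eq_zero_iff_dvd _ p).mpr hn₀dvd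
  have hltpow : ∀ x y : ℕ, y ≤ x → y < p ^ (x + 1) := by
    intro x y hxy
    calc y ≤ x := hxy
    _ < 2 ^ x := Nat.lt_two_pow_self
    _ ≤ 2 ^ (x + 1) := Nat.pow_le_pow_right (by omega) (Nat.le_succ x)
    _ ≤ p ^ (x + 1) := Nat.pow_le_pow_left hp2 _
  set K := max (Stmt9Aux.ldeg' A) (Stmt9Aux.ldeg' Qb) + 1 with hKdef
  set ℓ := n₀ + 1 with hℓdef
  have hKA : Stmt9Aux.ldeg' A < p ^ K := hltpow _ _ (le_max_left _ _)
  have hKQ : Stmt9Aux.ldeg' Qb < p ^ K := hltpow _ _ (le_max_right _ _)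
  have hn₀ℓ : n₀ < p ^ ℓ := hltpow _ _ (le_refl n₀)
  have hppos : 0 < p := by omega
  have hpKpos : 0 < p ^ K := Nat.pow_pos hppos
  have hB1 : 1 < p ^ (K + ℓ + K) := Nat.one_lt_pow (by omega) hp2
  have hb0 : n₀ * p ^ K ≠ 0 := Nat.mul_ne_zero hn₀ (by omega)
  have hbB : n₀ * p ^ K < p ^ (K + ℓ + K) := by
    calc n₀ * p ^ K < p ^ ℓ * p ^ K := (Nat.mul_lt_mul_right hpKpos).mpr hn₀ℓ
    _ = p ^ (ℓ + K) := (pow_add p ℓ K).symm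
    _ ≤ p ^ (K + ℓ + K) := Nat.pow_le_pow_right (by omega) (by omega)
  have hgood : ∀ n : ℕ,
      ¬ (∀ j, n / (p ^ (K + ℓ + K)) ^ j % (p ^ (K + ℓ + K)) ≠ n₀ * p ^ K) →
      (p : ℤ) ∣ (P ^ n * Q).coeff 0 := by
    intro n hn
    push_neg at hn
    obtain ⟨j, hj⟩ := hn
    rw [keydvd]
    exact Stmt9Aux.ct_zero_of_aligned A Qb n₀ K ℓ hn₀ℓ hA0 hKA hKQ n j hj
  have hbad := Stmt9Aux.avoid_density (p ^ (K + ℓ + K)) (n₀ * p ^ K) hB1 hb0 hbB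
  have hsub : ∀ N : ℕ,
      (((Finset.range N).filter fun n => ¬ (p : ℤ) ∣ (P ^ n * Q).coeff 0).card : ℝ)
      ≤ (((Finset.range N).filter fun n =>
          ∀ j, n / (p ^ (K + ℓ + K)) ^ j % (p ^ (K + ℓ + K)) ≠ n₀ * p ^ K).card : ℝ) := by
    intro N
    have : ((Finset.range N).filter fun n => ¬ (p : ℤ) ∣ (P ^ n * Q).coeff 0)
        ⊆ ((Finset.range N).filter fun n =>
          ∀ j, n / (p ^ (K + ℓ + K)) ^ j % (p ^ (K + ℓ + K)) ≠ n₀ * p ^ K) := by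
      intro x hx
      rw [Finset.mem_filter] at hx ⊢
      refine ⟨hx.1, ?_⟩
      by_contra hc
      exact hx.2 (hgood x hc)
    exact_mod_cast Nat.cast_le.mpr (Finset.card_le_card this)
  have hneg0 : Filter.Tendsto (fun N : ℕ =>
      (((Finset.range N).filter fun n => ¬ (p : ℤ) ∣ (P ^ n * Q).coeff 0).card : ℝ) / N)
      Filter.atTop (nhds 0) := by
    refine squeeze_zero (fun N => by positivity) (fun N => ?_) hbad
    rcases Nat.eq_zero_or_pos N with rfl | hN
    · simp
    · have hN0 : (0:ℝ) < N := by exact_mod_cast hN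
      exact div_le_div_of_nonneg_right (hsub N) hN0.le
  have hfin : Filter.Tendsto (fun N : ℕ =>
      1 - (((Finset.range N).filter fun n => ¬ (p : ℤ) ∣ (P ^ n * Q).coeff 0).card : ℝ) / N)
      Filter.atTop (nhds 1) := by
    have h2 := (tendsto_const_nhds :
      Filter.Tendsto (fun _ : ℕ => (1:ℝ)) Filter.atTop (nhds 1)).sub hneg0
    simpa using h2
  refine Filter.Tendsto.congr' ?_ hfin
  filter_upwards [Filter.eventually_ge_atTop 1] with N hN
  have hN0 : (0:ℝ) < N := by exact_mod_cast (by omega : 0 < N)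
  have hcount := Finset.card_filter_add_card_filter_not
    (s := Finset.range N) (fun n => (p : ℤ) ∣ (P ^ n * Q).coeff 0)
  rw [Finset.card_range] at hcount
  have hcast : (((Finset.range N).filter fun n => (p : ℤ) ∣ (P ^ n * Q).coeff 0).card : ℝ)
      = (N : ℝ) - (((Finset.range N).filter fun n => ¬ (p : ℤ) ∣ (P ^ n * Q).coeff 0).card : ℝ) := by
    have h3 : (((Finset.range N).filter fun n => (p : ℤ) ∣ (P ^ n * Q).coeff 0).card : ℝ)
        + (((Finset.range N).filter fun n => ¬ (p : ℤ) ∣ (P ^ n * Q).coeff 0).card : ℝ) = (N : ℝ) := by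
      exact_mod_cast congrArg (Nat.cast (R := ℝ)) hcount
    linarith
  rw [hcast, sub_div, div_self (ne_of_gt hN0)]
end

section
/- Let P, Q be one-variable Laurent polynomials with integer coefficients and p a prime. If there exists n_0 ∈ ℕ with p | ct(P^{n_0}), then the sequence ct(P^n Q) mod p contains arbitrarily long runs of consecutive zeros: for every L there exists n such that ct(P^{n+j} Q) ≡ 0 (mod p) for all 0 ≤ j < L. -/
open scoped Classical

section Aux

variable {R : Type*} [Semiring R]

theorem aux_apply_eq_zero {Q : LaurentPolynomial R} {i : ℤ} (h : ldeg Q < i.natAbs) :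
    Q.coeff i = 0 := by
  by_contra hne
  have : i ∈ Q.coeff.support := Finsupp.mem_support_iff.mpr hne
  exact absurd (Finset.le_sup (f := fun i : ℤ => i.natAbs) this) (not_le.mpr h)

theorem aux_ldeg_mul_le (f g : LaurentPolynomial R) : ldeg (f * g) ≤ ldeg f + ldeg g := by
  apply Finset.sup_le
  intro i hi
  have := AddMonoidAlgebra.support_coeff_mul_subset f g hi
  rw [Finset.mem_add] at this
  obtain ⟨a, ha, b, hb, rfl⟩ := this
  calc (a + b).natAbs ≤ a.natAbs + b.natAbs := Int.natAbs_add_le a b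
    _ ≤ ldeg f + ldeg g :=
      add_le_add (Finset.le_sup (f := fun i : ℤ => i.natAbs) ha)
        (Finset.le_sup (f := fun i : ℤ => i.natAbs) hb)

theorem aux_ldeg_pow_le (f : LaurentPolynomial R) (n : ℕ) : ldeg (f ^ n) ≤ n * ldeg f := by
  induction n with
  | zero =>
    simp only [pow_zero, zero_mul, Nat.le_zero]
    have : (1 : LaurentPolynomial R) = AddMonoidAlgebra.single (0 : ℤ) (1 : R) := rfl
    rw [ldeg, this]
    apply Nat.le_zero.mp
    apply Finset.sup_le
    intro i hi
    have := Finsupp.support_single_subset hi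
    simp only [Finset.mem_singleton] at this
    simp [this]
  | succ n ih =>
    calc ldeg (f ^ (n + 1)) = ldeg (f ^ n * f) := by rw [pow_succ]
      _ ≤ ldeg (f ^ n) + ldeg f := aux_ldeg_mul_le _ _
      _ ≤ n * ldeg f + ldeg f := Nat.add_le_add_right ih _
      _ = (n + 1) * ldeg f := by ring

end Aux

noncomputable def castLP (p : ℕ) (f : LaurentPolynomial ℤ) : LaurentPolynomial (ZMod p) :=
  AddMonoidAlgebra.ofCoeff (Finsupp.mapRange (Int.cast : ℤ → ZMod p) Int.cast_zero f.coeff)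

theorem castLP_apply (p : ℕ) (f : LaurentPolynomial ℤ) (i : ℤ) :
    (castLP p f).coeff i = ((f.coeff i : ℤ) : ZMod p) := Finsupp.mapRange_apply (hf := Int.cast_zero)

theorem castLP_add (p : ℕ) (f g : LaurentPolynomial ℤ) :
    castLP p (f + g) = castLP p f + castLP p g :=
  congrArg AddMonoidAlgebra.ofCoeff (Finsupp.mapRange_add (fun a b => Int.cast_add a b) f.coeff g.coeff)

theorem castLP_single (p : ℕ) (a : ℤ) (b : ℤ) :
    castLP p (AddMonoidAlgebra.single a b) = AddMonoidAlgebra.single a ((b : ZMod p)) :=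
  congrArg AddMonoidAlgebra.ofCoeff Finsupp.mapRange_single

theorem castLP_mul (p : ℕ) (f g : LaurentPolynomial ℤ) :
    castLP p (f * g) = castLP p f * castLP p g := by
  induction f using AddMonoidAlgebra.induction with
  | zero =>
    have : castLP p 0 = 0 := by
      ext a
      rw [castLP_apply]
      simp
    rw [zero_mul, this, zero_mul]
  | single_add x r f hx hr ih =>
    rw [add_mul, castLP_add, castLP_add, add_mul, ih]
    congr 1
    ext y
    rw [castLP_apply, AddMonoidAlgebra.coeff_single_mul_apply, castLP_single,
      AddMonoidAlgebra.coeff_single_mul_apply, castLP_apply]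
    push_cast
    ring

/-- Reduction mod `p` on coefficients, as a ring hom on Laurent polynomials. -/
noncomputable def phi (p : ℕ) : LaurentPolynomial ℤ →+* LaurentPolynomial (ZMod p) where
  toFun f := castLP p f
  map_zero' := by
    show castLP p 0 = 0
    ext a
    rw [castLP_apply]
    simp
  map_add' := castLP_add p
  map_one' := by
    show castLP p (AddMonoidAlgebra.single (0 : ℤ) (1 : ℤ)) = (1 : LaurentPolynomial (ZMod p))
    rw [castLP_single, Int.cast_one]
    rfl
  map_mul' := castLP_mul p

theorem phi_apply (p : ℕ) (f : LaurentPolynomial ℤ) (i : ℤ) :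
    (phi p f).coeff i = ((f.coeff i : ℤ) : ZMod p) := by
  show (castLP p f).coeff i = ((f.coeff i : ℤ) : ZMod p)
  exact castLP_apply p f i

/-- `substPow` as a ring hom. -/
noncomputable def substPowHom (R : Type*) [CommSemiring R] (m : ℕ) :
    LaurentPolynomial R →+* LaurentPolynomial R :=
  AddMonoidAlgebra.mapDomainRingHom R (AddMonoidHom.mulLeft (m : ℤ))

theorem substPowHom_apply {R : Type*} [CommSemiring R] (m : ℕ) (f : LaurentPolynomial R) :
    substPowHom R m f = AddMonoidAlgebra.mapDomain (fun i : ℤ => (m : ℤ) * i) f := rfl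

theorem charP_LP (p : ℕ) [NeZero p] : CharP (LaurentPolynomial (ZMod p)) p := by
  constructor
  intro n
  have : (n : LaurentPolynomial (ZMod p)) = AddMonoidAlgebra.single (0 : ℤ) ((n : ZMod p)) := by
    rw [← map_natCast (LaurentPolynomial.C (R := ZMod p)) n]
    rfl
  rw [this, AddMonoidAlgebra.single_eq_zero, ZMod.natCast_eq_zero_iff]

theorem pow_p_eq (p : ℕ) (hp : p.Prime) (f : LaurentPolynomial (ZMod p)) :
    f ^ p = substPowHom (ZMod p) p f := by
  haveI : Fact p.Prime := ⟨hp⟩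
  haveI := charP_LP p
  haveI : ExpChar (LaurentPolynomial (ZMod p)) p := ExpChar.prime hp
  have key : frobenius (LaurentPolynomial (ZMod p)) p = substPowHom (ZMod p) p := by
    apply AddMonoidAlgebra.ringHom_ext
    · intro b
      rw [frobenius_def, AddMonoidAlgebra.single_pow, substPowHom_apply,
        AddMonoidAlgebra.mapDomain_single]
      simp [ZMod.pow_card]
    · intro a
      rw [frobenius_def, AddMonoidAlgebra.single_pow, substPowHom_apply,
        AddMonoidAlgebra.mapDomain_single]
      simp [nsmul_eq_mul]
  calc f ^ p = frobenius (LaurentPolynomial (ZMod p)) p f := rfl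
    _ = substPowHom (ZMod p) p f := by rw [key]

theorem pow_p_pow_eq (p : ℕ) (hp : p.Prime) (k : ℕ) (f : LaurentPolynomial (ZMod p)) :
    f ^ (p ^ k) = AddMonoidAlgebra.mapDomain (fun i : ℤ => ((p ^ k : ℕ) : ℤ) * i) f := by
  induction k with
  | zero =>
    have : (fun i : ℤ => ((1 : ℕ) : ℤ) * i) = id := by
      funext i; simp
    rw [pow_zero, pow_one, this, AddMonoidAlgebra.mapDomain, Finsupp.mapDomain_id]
  | succ k ih =>
    rw [pow_succ, pow_mul, ih]
    have := pow_p_eq p hp (AddMonoidAlgebra.mapDomain (fun i : ℤ => ((p ^ k : ℕ) : ℤ) * i) f)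
    rw [this, substPowHom_apply]
    simp only [AddMonoidAlgebra.mapDomain, AddMonoidAlgebra.coeff_ofCoeff, ← Finsupp.mapDomain_comp]
    congr 2
    funext i
    show (p : ℤ) * (((p ^ k : ℕ) : ℤ) * i) = ((p ^ (k + 1) : ℕ) : ℤ) * i
    push_cast
    ring

/-- if `p ∣ ct(P^{n₀})` for some `n₀`, then `ct(P^n Q) mod p` has arbitrarily
long runs of zeros. -/
theorem stmt10 (p : ℕ) (hp : p.Prime) (P Q : LaurentPolynomial ℤ)
    (h : ∃ n₀ : ℕ, (p : ℤ) ∣ (P ^ n₀).coeff 0) :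
    ∀ L : ℕ, ∃ n : ℕ, ∀ j < L, (p : ℤ) ∣ (P ^ (n + j) * Q).coeff 0 := by
  obtain ⟨n₀, hn₀⟩ := h
  intro L
  set f : LaurentPolynomial (ZMod p) := phi p P with hf
  set g : LaurentPolynomial (ZMod p) := phi p Q with hg
  set D : ℕ := L * ldeg f + ldeg g with hD
  -- choose k with D < p ^ k
  have hpk : D < p ^ D := by
    calc D < 2 ^ D := Nat.lt_two_pow_self
      _ ≤ p ^ D := Nat.pow_le_pow_left hp.two_le D
  set k : ℕ := D with hk
  refine ⟨n₀ * p ^ k, ?_⟩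
  intro j hj
  rw [← ZMod.intCast_zmod_eq_zero_iff_dvd]
  have hcoef : ((((P ^ (n₀ * p ^ k + j) * Q).coeff 0 : ℤ)) : ZMod p)
      = (phi p (P ^ (n₀ * p ^ k + j) * Q)).coeff 0 := (phi_apply _ _ _).symm
  rw [hcoef, map_mul, map_pow]
  -- rewrite the power
  have hsplit : (f : LaurentPolynomial (ZMod p)) ^ (n₀ * p ^ k + j) * g
      = (f ^ j * g) * (f ^ n₀) ^ (p ^ k) := by
    rw [← pow_mul, pow_add]
    ring
  rw [hsplit, pow_p_pow_eq p hp k]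
  set A : LaurentPolynomial (ZMod p) := f ^ j * g with hA
  set B : LaurentPolynomial (ZMod p) := f ^ n₀ with hB
  have hB0 : B.coeff 0 = 0 := by
    have : B.coeff 0 = (((P ^ n₀).coeff 0 : ℤ) : ZMod p) := by
      rw [hB, hf, ← map_pow, phi_apply]
    rw [this, ZMod.intCast_zmod_eq_zero_iff_dvd]
    exact hn₀
  have hAdeg : ldeg A < p ^ k := by
    calc ldeg A ≤ ldeg (f ^ j) + ldeg g := aux_ldeg_mul_le _ _
      _ ≤ j * ldeg f + ldeg g := Nat.add_le_add_right (aux_ldeg_pow_le _ _) _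
      _ ≤ L * ldeg f + ldeg g := Nat.add_le_add_right
          (Nat.mul_le_mul_right _ hj.le) _
      _ < p ^ k := hpk
  -- compute the constant term
  rw [AddMonoidAlgebra.mapDomain, Finsupp.mapDomain, AddMonoidAlgebra.ofCoeff_finsuppSum]
  simp only [AddMonoidAlgebra.ofCoeff_single]
  rw [Finsupp.mul_sum]
  rw [Finsupp.sum, AddMonoidAlgebra.coeff_sum, Finset.sum_apply']
  apply Finset.sum_eq_zero
  intro c hc
  rw [AddMonoidAlgebra.coeff_mul_single_apply]
  rcases eq_or_ne c 0 with rfl | hcne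
  · rw [hB0, mul_zero]
  · have : ldeg A < (0 + -(((p ^ k : ℕ) : ℤ) * c)).natAbs := by
      rw [zero_add, Int.natAbs_neg, Int.natAbs_mul]
      calc ldeg A < p ^ k := hAdeg
        _ = p ^ k * 1 := (mul_one _).symm
        _ ≤ ((p ^ k : ℕ) : ℤ).natAbs * c.natAbs := by
            apply Nat.mul_le_mul
            · rw [Int.natAbs_natCast]
            · omega
    rw [aux_apply_eq_zero this, zero_mul]
end

section
/- Let P, Q be one-variable Laurent polynomials with integer coefficients and p a prime such that p ∤ ct(P^n) for all n ∈ ℕ. Then the sequence (ct(P^n Q) mod p)_{n∈ℕ} is uniformly recurrent: for every finite word w occurring in the sequence, there is a constant C_w such that every window of C_w consecutive terms contains an occurrence of w. -/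
open scoped Classical

/-- A sequence is uniformly recurrent if every factor that occurs, occurs in every
sufficiently long window. -/
def UniformlyRecurrent {X : Type*} (s : ℕ → X) : Prop :=
  ∀ i L : ℕ, ∃ C : ℕ, ∀ m : ℕ, ∃ j : ℕ, m ≤ j ∧ j ≤ m + C ∧ ∀ t < L, s (j + t) = s (i + t)

namespace Stmt13Aux

theorem nat_div_succ_bounds (a q : ℕ) (hq : 0 < q) :
    a ≤ (a / q + 1) * q ∧ (a / q + 1) * q ≤ a + q := by
  have h1 := Nat.div_add_mod a q
  have h2 := Nat.mod_lt a hq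
  have h3 : (a / q + 1) * q = q * (a / q) + q := by ring
  constructor <;> omega

open AddMonoidAlgebra Finsupp

section General

variable {R : Type*} [CommRing R]

theorem lmul_apply (f g : LaurentPolynomial R) (i : ℤ) :
    (f * g).coeff i = ∑ j ∈ g.coeff.support, f.coeff (i - j) * g.coeff j := by
  rw [AddMonoidAlgebra.coeff_mul_apply_right, Finsupp.sum]
  simp only [sub_eq_add_neg]

theorem supp_mul {A B : ℕ} {f g : LaurentPolynomial R}
    (hf : ∀ a ∈ f.coeff.support, a.natAbs ≤ A) (hg : ∀ b ∈ g.coeff.support, b.natAbs ≤ B) :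
    ∀ c ∈ (f * g).coeff.support, c.natAbs ≤ A + B := by
  intro c hc
  have := AddMonoidAlgebra.support_coeff_mul_subset f g hc
  rw [Finset.mem_add] at this
  obtain ⟨a, ha, b, hb, rfl⟩ := this
  exact le_trans (Int.natAbs_add_le a b) (add_le_add (hf a ha) (hg b hb))

theorem supp_pow {A : ℕ} {f : LaurentPolynomial R}
    (hf : ∀ a ∈ f.coeff.support, a.natAbs ≤ A) :
    ∀ n : ℕ, ∀ c ∈ (f ^ n).coeff.support, c.natAbs ≤ n * A := by
  intro n
  induction n with
  | zero =>
    intro c hc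
    rw [pow_zero] at hc
    have : c ∈ ({0} : Finset ℤ) := by
      rw [AddMonoidAlgebra.one_def, AddMonoidAlgebra.coeff_single] at hc
      exact Finsupp.support_single_subset hc
    simp only [Finset.mem_singleton] at this
    simp [this]
  | succ n ih =>
    intro c hc
    rw [pow_succ] at hc
    have := supp_mul ih hf c hc
    calc c.natAbs ≤ n * A + A := this
    _ = (n + 1) * A := by ring

theorem substPow_apply_mul {q : ℕ} (hq : q ≠ 0) (S : LaurentPolynomial R) (j : ℤ) :
    (substPow q S).coeff ((q : ℤ) * j) = S.coeff j :=
  Finsupp.mapDomain_apply (mul_right_injective₀ (Int.natCast_ne_zero.mpr hq)) S.coeff j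

theorem substPow_apply_of_not_dvd (q : ℕ) (S : LaurentPolynomial R) {i : ℤ}
    (h : ¬ (q : ℤ) ∣ i) : (substPow q S).coeff i = 0 := by
  refine Finsupp.mapDomain_notin_range _ _ fun hi => h ?_
  obtain ⟨j, rfl⟩ := hi
  exact Dvd.intro j rfl

theorem substPow_single (q : ℕ) (a : ℤ) (b : R) :
    substPow q (AddMonoidAlgebra.single a b) = AddMonoidAlgebra.single ((q : ℤ) * a) b :=
  congrArg AddMonoidAlgebra.ofCoeff Finsupp.mapDomain_single

/-- The key comparison lemma. -/
theorem key {d q : ℕ} (hq : q ≠ 0) {S S' : LaurentPolynomial R}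
    (hwin : ∀ i : ℤ, i.natAbs ≤ d → S.coeff i = S'.coeff i) (T : LaurentPolynomial R) (i : ℤ)
    (hT : ∀ j ∈ T.coeff.support, j.natAbs + i.natAbs < q * (d + 1)) :
    (substPow q S * T).coeff i = (substPow q S' * T).coeff i := by
  rw [lmul_apply, lmul_apply]
  refine Finset.sum_congr rfl fun j hj => ?_
  by_cases hdvd : (q : ℤ) ∣ (i - j)
  · obtain ⟨m, hm⟩ := hdvd
    have hmd : m.natAbs ≤ d := by
      have h1 : (i - j).natAbs ≤ i.natAbs + j.natAbs := Int.natAbs_sub_le i j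
      have h2 : (i - j).natAbs = q * m.natAbs := by
        rw [hm, Int.natAbs_mul, Int.natAbs_natCast]
      have h3 := hT j hj
      nlinarith [h1, h2, h3]
    rw [hm, substPow_apply_mul hq, substPow_apply_mul hq, hwin m hmd]
  · rw [substPow_apply_of_not_dvd q _ hdvd, substPow_apply_of_not_dvd q _ hdvd]

end General

section Prime

variable {p : ℕ} [hp : Fact p.Prime]

noncomputable instance : CharP (LaurentPolynomial (ZMod p)) p :=
  charP_of_injective_ringHom (f := AddMonoidAlgebra.singleZeroRingHom (R := ZMod p) (M := ℤ))
    (fun a b hab => by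
      simpa using Finsupp.single_injective (0 : ℤ) (congrArg AddMonoidAlgebra.coeff hab)) p

theorem pow_charP (S : LaurentPolynomial (ZMod p)) : S ^ p = substPow p S := by
  conv_lhs => rw [← AddMonoidAlgebra.sum_coeff_single S]
  rw [Finsupp.sum, sum_pow_char, substPow, Finsupp.mapDomain, Finsupp.sum,
    AddMonoidAlgebra.ofCoeff_sum]
  refine Finset.sum_congr rfl fun a _ => ?_
  rw [AddMonoidAlgebra.single_pow, ZMod.pow_card]
  rw [AddMonoidAlgebra.ofCoeff_single, nsmul_eq_mul]

theorem pow_charP_pow (S : LaurentPolynomial (ZMod p)) (k : ℕ) :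
    S ^ (p ^ k) = substPow (p ^ k) S := by
  induction k with
  | zero =>
    show S ^ 1 = _
    rw [pow_one]
    show S = AddMonoidAlgebra.ofCoeff (Finsupp.mapDomain _ S.coeff)
    have : (fun i : ℤ => ((p ^ 0 : ℕ) : ℤ) * i) = id := by funext i; simp
    rw [this, Finsupp.mapDomain_id]
  | succ k ih =>
    rw [pow_succ, pow_mul, ih, pow_charP]
    show AddMonoidAlgebra.ofCoeff (Finsupp.mapDomain _ (Finsupp.mapDomain _ S.coeff)) = _
    rw [← Finsupp.mapDomain_comp]
    unfold substPow
    congr 2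
    funext i
    show (p : ℤ) * ((p ^ k : ℕ) * i) = ((p ^ (k + 1) : ℕ) : ℤ) * i
    push_cast
    ring

variable {P Q : LaurentPolynomial (ZMod p)} {d : ℕ}
  (hP : ∀ a ∈ P.coeff.support, a.natAbs ≤ d)

theorem expand (n c k : ℕ) :
    P ^ (n * p ^ k + c) = substPow (p ^ k) (P ^ n) * P ^ c := by
  rw [pow_add, pow_mul, pow_charP_pow]

include hP

theorem winTrans {k c n n' : ℕ} (hc : c < p ^ k)
    (hw : ∀ i : ℤ, i.natAbs ≤ d → (P ^ n).coeff i = (P ^ n').coeff i) :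
    ∀ i : ℤ, i.natAbs ≤ d → (P ^ (n * p ^ k + c)).coeff i = (P ^ (n' * p ^ k + c)).coeff i := by
  intro i hi
  rw [expand, expand]
  refine key (pow_pos hp.out.pos k).ne' hw _ i fun j hj => ?_
  have h1 := supp_pow hP c j hj
  have h2 : c + 1 ≤ p ^ k := hc
  nlinarith [h1, h2, hi]

theorem scalarStep {γ : ZMod p} {k j n : ℕ} (hj : j < p ^ k)
    (hw : ∀ i : ℤ, i.natAbs ≤ d → (P ^ n).coeff i = if i = 0 then γ else 0) :
    ∀ i : ℤ, i.natAbs ≤ d → (P ^ (n * p ^ k + j)).coeff i = γ * (P ^ j).coeff i := by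
  intro i hi
  rw [expand]
  have hq : p ^ k ≠ 0 := (pow_pos hp.out.pos k).ne'
  have hwin : ∀ i : ℤ, i.natAbs ≤ d →
      (P ^ n).coeff i = (AddMonoidAlgebra.single (0 : ℤ) γ : LaurentPolynomial (ZMod p)).coeff i := by
    intro i hi
    rw [hw i hi, AddMonoidAlgebra.coeff_single, Finsupp.single_apply]
    simp [eq_comm]
  rw [key hq hwin _ i fun j' hj' => by
      have h1 := supp_pow hP j j' hj'
      have h2 : j + 1 ≤ p ^ k := hj
      nlinarith [h1, h2, hi]]
  rw [substPow_single, mul_zero]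
  exact AddMonoidAlgebra.coeff_single_zero_mul _ γ i

set_option linter.unusedSectionVars false in
theorem scalarZero {k : ℕ} (hd : d < p ^ k) (n : ℕ) :
    ∀ i : ℤ, i.natAbs ≤ d → (P ^ (n * p ^ k)).coeff i = if i = 0 then (P ^ n).coeff 0 else 0 := by
  intro i hi
  have hq : p ^ k ≠ 0 := (pow_pos hp.out.pos k).ne'
  rw [pow_mul, pow_charP_pow]
  by_cases h0 : i = 0
  · subst h0
    have : (substPow (p ^ k) (P ^ n)).coeff ((p ^ k : ℕ) * (0 : ℤ)) = (P ^ n).coeff 0 :=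
      substPow_apply_mul hq _ 0
    simpa using this
  · rw [if_neg h0]
    refine substPow_apply_of_not_dvd _ _ fun hdvd => ?_
    have h1 : (p ^ k : ℕ) ∣ i.natAbs := by
      have := Int.natAbs_dvd_natAbs.mpr hdvd
      rwa [Int.natAbs_natCast] at this
    have h2 : 0 < i.natAbs := Int.natAbs_pos.mpr h0
    have := Nat.le_of_dvd h2 h1
    omega

theorem blockEq (hQ : ∀ b ∈ Q.coeff.support, b.natAbs ≤ d) {k c n n' : ℕ} (hc : c < p ^ k)
    (hw : ∀ i : ℤ, i.natAbs ≤ d → (P ^ n).coeff i = (P ^ n').coeff i) :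
    (P ^ (n * p ^ k + c) * Q).coeff 0 = (P ^ (n' * p ^ k + c) * Q).coeff 0 := by
  rw [expand, expand, mul_assoc, mul_assoc]
  refine key (pow_pos hp.out.pos k).ne' hw _ 0 fun j hj => ?_
  have h1 := supp_mul (supp_pow hP c) hQ j hj
  have h2 : c + 1 ≤ p ^ k := hc
  have h3 : (0 : ℤ).natAbs = 0 := rfl
  have h4 : 0 < p ^ k := pow_pos hp.out.pos k
  nlinarith

theorem claimA (hne : ∀ n : ℕ, (P ^ n).coeff 0 ≠ 0) :
    ∃ K : ℕ, ∀ m : ℕ, ∃ c : ℕ, c < p ^ K ∧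
      ∀ i : ℤ, i.natAbs ≤ d → (P ^ (m * p ^ K + c)).coeff i = (P ^ (0 : ℕ)).coeff i := by
  haveI : NeZero p := ⟨hp.out.ne_zero⟩
  set k0 : ℕ := d with hk0
  have hd0 : d < p ^ k0 := Nat.lt_pow_self hp.out.one_lt (n := d)
  set wit : ZMod p → ℕ := fun γ =>
    if h : ∃ m : ℕ, (P ^ m).coeff 0 = γ then h.choose else 0 with hwit
  set J : ℕ := Finset.univ.sup wit with hJ
  set k1 : ℕ := J with hk1
  have hJ1 : J < p ^ k1 := Nat.lt_pow_self hp.out.one_lt (n := J)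
  refine ⟨k0 + (p - 2) * (k1 + k0), fun m => ?_⟩
  set γ : ZMod p := (P ^ m).coeff 0 with hγdef
  have hγ : γ ≠ 0 := hne m
  have hex : ∃ m' : ℕ, (P ^ m').coeff 0 = γ := ⟨m, rfl⟩
  set j : ℕ := wit γ with hjdef
  have hj0 : (P ^ j).coeff 0 = γ := by
    rw [hjdef, hwit]
    simp only [dif_pos hex]
    exact hex.choose_spec
  have hjk1 : j < p ^ k1 := lt_of_le_of_lt (Finset.le_sup (f := wit) (Finset.mem_univ γ)) hJ1
  -- main induction
  have main : ∀ s : ℕ, ∃ c : ℕ, c < p ^ (k0 + s * (k1 + k0)) ∧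
      ∀ i : ℤ, i.natAbs ≤ d →
        (P ^ (m * p ^ (k0 + s * (k1 + k0)) + c)).coeff i = if i = 0 then γ ^ (s + 1) else 0 := by
    intro s
    induction s with
    | zero =>
      refine ⟨0, pow_pos hp.out.pos _, fun i hi => ?_⟩
      simp only [Nat.zero_mul, Nat.add_zero, pow_one]
      rw [Nat.add_zero]
      rw [scalarZero hP hd0 m i hi, hγdef, pow_one]
    | succ s ih =>
      obtain ⟨c, hc, hw⟩ := ih
      set e : ℕ := k0 + s * (k1 + k0) with he
      set n : ℕ := m * p ^ e + c with hn
      have step1 : ∀ i : ℤ, i.natAbs ≤ d →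
          (P ^ (n * p ^ k1 + j)).coeff i = γ ^ (s + 1) * (P ^ j).coeff i :=
        scalarStep hP hjk1 hw
      have step2 : ∀ i : ℤ, i.natAbs ≤ d →
          (P ^ ((n * p ^ k1 + j) * p ^ k0)).coeff i =
            if i = 0 then γ ^ (s + 2) else 0 := by
        intro i hi
        rw [scalarZero hP hd0 (n * p ^ k1 + j) i hi]
        have h0 : ((0 : ℤ)).natAbs ≤ d := by simp
        rw [step1 0 h0, hj0]
        by_cases h : i = 0 <;> simp [h, pow_succ, mul_comm, mul_assoc, mul_left_comm]
      refine ⟨(c * p ^ k1 + j) * p ^ k0, ?_, ?_⟩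
      · have h1 : c * p ^ k1 + j < p ^ e * p ^ k1 := by nlinarith
        calc (c * p ^ k1 + j) * p ^ k0 < (p ^ e * p ^ k1) * p ^ k0 :=
              (Nat.mul_lt_mul_right (pow_pos hp.out.pos k0)).mpr h1
        _ = p ^ (k0 + (s + 1) * (k1 + k0)) := by
              rw [← pow_add, ← pow_add, he]; ring_nf
      · intro i hi
        have harith : m * p ^ (k0 + (s + 1) * (k1 + k0)) + (c * p ^ k1 + j) * p ^ k0 =
            (n * p ^ k1 + j) * p ^ k0 := by
          rw [hn]
          have : k0 + (s + 1) * (k1 + k0) = e + k1 + k0 := by rw [he]; ring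
          rw [this, pow_add, pow_add]
          ring
        rw [harith]
        exact step2 i hi
  obtain ⟨c, hc, hw⟩ := main (p - 2)
  refine ⟨c, hc, fun i hi => ?_⟩
  rw [hw i hi]
  have hps : p - 2 + 1 = p - 1 := by have := hp.out.two_le; omega
  rw [hps, ZMod.pow_card_sub_one_eq_one hγ, pow_zero]
  rw [AddMonoidAlgebra.one_def, AddMonoidAlgebra.coeff_single]
  rw [Finsupp.single_apply]
  simp [eq_comm]

end Prime

/-- Reduction mod `p` as a ring hom on Laurent polynomials. -/
noncomputable def phi (p : ℕ) : LaurentPolynomial ℤ →+* LaurentPolynomial (ZMod p) :=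
  AddMonoidAlgebra.liftNCRingHom
    (AddMonoidAlgebra.singleZeroRingHom.comp (Int.castRingHom (ZMod p)))
    (AddMonoidAlgebra.of (ZMod p) ℤ) (fun _ _ => Commute.all _ _)

theorem phi_single (p : ℕ) (a : ℤ) (b : ℤ) :
    phi p (AddMonoidAlgebra.single a b) = AddMonoidAlgebra.single a ((b : ZMod p)) := by
  show AddMonoidAlgebra.liftNC _ _ (AddMonoidAlgebra.single a b) = _
  rw [AddMonoidAlgebra.liftNC_single]
  show AddMonoidAlgebra.single (0 : ℤ) ((b : ZMod p)) * AddMonoidAlgebra.single a 1 = _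
  rw [AddMonoidAlgebra.single_mul_single]
  simp

theorem phi_apply (p : ℕ) (S : LaurentPolynomial ℤ) (i : ℤ) :
    (phi p S).coeff i = ((S.coeff i : ℤ) : ZMod p) := by
  induction S using AddMonoidAlgebra.induction_linear with
  | zero => simp
  | add f g hf hg =>
    rw [map_add]
    show (phi p f + phi p g).coeff i = _
    rw [AddMonoidAlgebra.coeff_add, Finsupp.add_apply, hf, hg]
    show _ = (((f + g).coeff i : ℤ) : ZMod p)
    rw [AddMonoidAlgebra.coeff_add, Finsupp.add_apply]
    push_cast
    ring
  | single a b =>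
    rw [phi_single]
    rw [AddMonoidAlgebra.coeff_single, AddMonoidAlgebra.coeff_single]
    rw [Finsupp.single_apply, Finsupp.single_apply]
    split <;> simp

end Stmt13Aux

/-- if `p ∤ ct(P^n)` for all `n`, then `(ct(P^n Q) mod p)_n` is uniformly
recurrent. -/
theorem stmt13 (p : ℕ) (hp : p.Prime) (P Q : LaurentPolynomial ℤ)
    (h : ∀ n : ℕ, ¬ (p : ℤ) ∣ (P ^ n).coeff 0) :
    UniformlyRecurrent (fun n : ℕ => (((P ^ n * Q).coeff 0 : ℤ) : ZMod p)) := by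
  haveI : Fact p.Prime := ⟨hp⟩
  set Pb : LaurentPolynomial (ZMod p) := Stmt13Aux.phi p P with hPb
  set Qb : LaurentPolynomial (ZMod p) := Stmt13Aux.phi p Q with hQb
  set d : ℕ := max (ldeg Pb) (ldeg Qb) with hd
  have hPsup : ∀ a ∈ Pb.coeff.support, a.natAbs ≤ d := fun a ha =>
    le_trans (Finset.le_sup (f := fun i : ℤ => i.natAbs) ha) (le_max_left _ _)
  have hQsup : ∀ b ∈ Qb.coeff.support, b.natAbs ≤ d := fun b hb =>
    le_trans (Finset.le_sup (f := fun i : ℤ => i.natAbs) hb) (le_max_right _ _)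
  have hne : ∀ n : ℕ, (Pb ^ n).coeff 0 ≠ 0 := by
    intro n hn
    apply h n
    rw [← ZMod.intCast_zmod_eq_zero_iff_dvd]
    rw [hPb, ← map_pow, Stmt13Aux.phi_apply] at hn
    exact hn
  have sEq : ∀ N : ℕ, (((P ^ N * Q).coeff 0 : ℤ) : ZMod p) = (Pb ^ N * Qb).coeff 0 := by
    intro N
    rw [hPb, hQb, ← map_pow, ← map_mul, Stmt13Aux.phi_apply]
  obtain ⟨K, hK⟩ := Stmt13Aux.claimA hPsup hne
  intro i L
  set k : ℕ := i + L with hk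
  have hkL : i + L ≤ p ^ k := (Nat.lt_pow_self hp.one_lt (n := i + L)).le
  have hpk : 0 < p ^ k := pow_pos hp.pos k
  have hpK : 0 < p ^ K := pow_pos hp.pos K
  refine ⟨p ^ k + 2 * p ^ K * p ^ k + i, fun m => ?_⟩
  set M : ℕ := m / p ^ k + 1 with hM
  set m' : ℕ := M / p ^ K + 1 with hm'
  obtain ⟨c, hc, hwin⟩ := hK m'
  set n : ℕ := m' * p ^ K + c with hn
  refine ⟨n * p ^ k + i, ?_, ?_, ?_⟩
  · -- m ≤ j
    have h1 : m ≤ M * p ^ k := by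
      rw [hM]; exact (Stmt13Aux.nat_div_succ_bounds m (p ^ k) hpk).1
    have h2 : M ≤ n := by
      have hb : M ≤ m' * p ^ K := by
        rw [hm']; exact (Stmt13Aux.nat_div_succ_bounds M (p ^ K) hpK).1
      exact le_trans hb (by rw [hn]; exact Nat.le_add_right _ _)
    calc m ≤ M * p ^ k := h1
    _ ≤ n * p ^ k := Nat.mul_le_mul_right _ h2
    _ ≤ n * p ^ k + i := Nat.le_add_right _ _
  · -- j ≤ m + C
    have h1 : M * p ^ k ≤ m + p ^ k := by
      rw [hM]; exact (Stmt13Aux.nat_div_succ_bounds m (p ^ k) hpk).2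
    have h2 : m' * p ^ K ≤ M + p ^ K := by
      rw [hm']; exact (Stmt13Aux.nat_div_succ_bounds M (p ^ K) hpK).2
    have h3 : n ≤ M + 2 * p ^ K := by
      rw [hn]; omega
    calc n * p ^ k + i ≤ (M + 2 * p ^ K) * p ^ k + i :=
          Nat.add_le_add_right (Nat.mul_le_mul_right _ h3) i
    _ = M * p ^ k + 2 * p ^ K * p ^ k + i := by ring
    _ ≤ m + p ^ k + 2 * p ^ K * p ^ k + i := by omega
    _ = m + (p ^ k + 2 * p ^ K * p ^ k + i) := by ring
  · -- factor equality
    intro t ht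
    show (((P ^ (n * p ^ k + i + t) * Q).coeff 0 : ℤ) : ZMod p)
        = (((P ^ (i + t) * Q).coeff 0 : ℤ) : ZMod p)
    rw [sEq, sEq]
    have hadd : n * p ^ k + i + t = n * p ^ k + (i + t) := by ring
    have hit : i + t < p ^ k := by omega
    rw [hadd]
    have := Stmt13Aux.blockEq hPsup hQsup (n := n) (n' := 0) hit hwin
    rw [this]
    norm_num
end
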